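/- arXiv:1708.01317 — 7 statements merged into one kernel-verified Lean document; each statement's English description precedes it below -/
import Mathlib

section
/- Let E be a topological group acting continuously by isometries on a metric space (M,d). If H is the closure of an orbit G·c of a 1-Lipschitz map c from M to a compact metric space K (in the topology of pointwise convergence on the space of 1-Lipschitz maps M → K with the induced G-action), and if G is extremely amenable, then there exists a G-fixed 1-Lipschitz map c∞ in the closure of G·c; consequently the induced map ĉ on the space of orbit closures satisfies: for every compact F ⊆ M and ε > 0 there is g ∈ G with d_K(c(p), ĉ([p])) < ε for all p ∈ g·F. -/
/-!
The space `Lip(M, K)` of `1`-Lipschitz maps is a closed, hence compact, subspace of the product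
`M → K`. On it, evaluation `(f, p) ↦ f p` is jointly continuous, because the maps are
equicontinuous; so the translation action of `G` is continuous, and extreme amenability yields a
fixed point `c∞` in the orbit closure of `c`. Since all maps involved are `1`-Lipschitz,
pointwise approximation of `c∞` by translates of `c` on a finite `ε/3`-net of a compact set `F`
gives uniform `ε`-approximation on all of `F`.
-/

open Metric Set

def ExtremelyAmenable (G : Type) [Group G] [TopologicalSpace G] : Prop :=
  ∀ (X : Type) [TopologicalSpace X] [CompactSpace X] [T2Space X] [Nonempty X]
    [MulAction G X], Continuous (fun p : G × X => p.1 • p.2) →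
      ∃ x : X, ∀ g : G, g • x = x

theorem ExtremelyAmenable.exists_fixed_mem_closure_orbit {G X : Type} [Group G]
    [TopologicalSpace G] (hG : ExtremelyAmenable G) [TopologicalSpace X] [CompactSpace X]
    [T2Space X] [MulAction G X] [ContinuousSMul G X] (x : X) :
    ∃ y ∈ closure (MulAction.orbit G x), ∀ g : G, g • y = y := by
  let S : SubMulAction G X :=
    ⟨closure (MulAction.orbit G x), fun g _ hy => smul_closure_orbit_subset g x ⟨_, hy, rfl⟩⟩
  have : CompactSpace S := isCompact_iff_compactSpace.mp isClosed_closure.isCompact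
  have : Nonempty S := ⟨⟨x, subset_closure (MulAction.mem_orbit_self x)⟩⟩
  obtain ⟨y, hy⟩ := hG S continuous_smul
  exact ⟨y, y.2, fun g => congrArg Subtype.val (hy g)⟩

abbrev OneLipschitzMap (M K : Type*) [PseudoMetricSpace M] [PseudoMetricSpace K] :=
  {f : M → K // LipschitzWith 1 f}

namespace OneLipschitzMap

variable {G M K : Type*} [Group G] [PseudoMetricSpace M] [PseudoMetricSpace K]

instance [CompactSpace K] : CompactSpace (OneLipschitzMap M K) :=
  isCompact_iff_compactSpace.mp (isClosed_setOfPred_lipschitzWith 1).isCompact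

theorem continuous_eval : Continuous fun q : OneLipschitzMap M K × M => q.1.1 q.2 :=
  continuous_prod_of_continuous_lipschitzWith' _ 1 (fun f => f.2)
    fun p => (continuous_apply p).comp continuous_subtype_val

variable [MulAction G M] [IsIsometricSMul G M]

instance : MulAction G (OneLipschitzMap M K) where
  smul g f :=
    ⟨fun p => f.1 (g⁻¹ • p), (f.2.comp (isometry_smul M g⁻¹).lipschitz).weaken (mul_one 1).le⟩
  one_smul f := Subtype.ext <| funext fun p => by
    show f.1 ((1 : G)⁻¹ • p) = f.1 p
    rw [inv_one, one_smul]
  mul_smul g h f := Subtype.ext <| funext fun p => by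
    show f.1 ((g * h)⁻¹ • p) = f.1 (h⁻¹ • g⁻¹ • p)
    rw [mul_inv_rev, mul_smul]

@[simp]
theorem smul_apply (g : G) (f : OneLipschitzMap M K) (p : M) : (g • f).1 p = f.1 (g⁻¹ • p) :=
  rfl

instance [TopologicalSpace G] [ContinuousInv G] [ContinuousSMul G M] :
    ContinuousSMul G (OneLipschitzMap M K) where
  continuous_smul := continuous_induced_rng.2 <| continuous_pi fun _ =>
    continuous_eval.comp (continuous_snd.prodMk (continuous_fst.inv.smul continuous_const))

end OneLipschitzMap

theorem exists_forall_dist_lt_of_mem_closure {M K : Type*} [PseudoMetricSpace M]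
    [PseudoMetricSpace K] {S : Set (M → K)} (hS : ∀ f ∈ S, LipschitzWith 1 f) {f₀ : M → K}
    (hf₀ : LipschitzWith 1 f₀) (hmem : f₀ ∈ closure S) {F : Set M} (hF : IsCompact F) {ε : ℝ}
    (hε : 0 < ε) : ∃ f ∈ S, ∀ p ∈ F, dist (f p) (f₀ p) < ε := by
  obtain ⟨t, -, ht, hFt⟩ := hF.finite_cover_balls (by positivity : 0 < ε / 3)
  have hnhds : {f : M → K | ∀ q ∈ t, dist (f q) (f₀ q) < ε / 3} ∈ nhds f₀ :=
    (ht.eventually_all).2 fun q _ =>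
      (continuous_apply q).continuousAt.eventually (ball_mem_nhds (f₀ q) (by positivity))
  obtain ⟨f, hft, hfS⟩ := mem_closure_iff_nhds.1 hmem _ hnhds
  refine ⟨f, hfS, fun p hp => ?_⟩
  obtain ⟨q, hqt, hpq⟩ := mem_iUnion₂.1 (hFt hp)
  rw [mem_ball] at hpq
  calc dist (f p) (f₀ p) ≤ dist (f p) (f q) + dist (f q) (f₀ q) + dist (f₀ q) (f₀ p) :=
        dist_triangle4 _ _ _ _
    _ ≤ dist p q + dist (f q) (f₀ q) + dist q p := by
        gcongr
        · simpa using (hS f hfS).dist_le_mul p q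
        · simpa using hf₀.dist_le_mul q p
    _ < ε := by linarith [hft q hqt, dist_comm p q]

/-- If a Polish-type group `G` acts continuously by isometries on a metric space `M`,
`c : M → K` is a `1`-Lipschitz map to a compact metric space, and `G` is extremely amenable,
then the closure of the orbit `G · c` (in the topology of pointwise convergence, i.e. the
product topology on `M → K`) contains a `G`-fixed `1`-Lipschitz map `c∞`; consequently,
for every compact `F ⊆ M` and `ε > 0` there is `g ∈ G` with
`dist (c p) (ĉ [p]) < ε` for all `p ∈ g • F`, i.e. `dist (c (g • p)) (c∞ p) < ε` for `p ∈ F`. -/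
theorem extremelyAmenable_fixed_coloring
    (G M K : Type) [Group G] [TopologicalSpace G] [IsTopologicalGroup G]
    [MetricSpace M] [MetricSpace K] [CompactSpace K] [MulAction G M]
    (hcont : Continuous fun p : G × M => p.1 • p.2)
    (hiso : ∀ (g : G) (x y : M), dist (g • x) (g • y) = dist x y)
    (c : M → K) (hc : LipschitzWith 1 c)
    (hEA : ExtremelyAmenable G) :
    ∃ cinf : M → K, LipschitzWith 1 cinf ∧
      cinf ∈ closure {f : M → K | ∃ g : G, f = fun p => c (g⁻¹ • p)} ∧
      (∀ (g : G) (p : M), cinf (g • p) = cinf p) ∧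
      ∀ F : Set M, IsCompact F → ∀ ε : ℝ, 0 < ε → ∃ g : G,
        ∀ p ∈ F, dist (c (g • p)) (cinf p) < ε := by
  have : ContinuousSMul G M := ⟨hcont⟩
  have : IsIsometricSMul G M := ⟨fun g => Isometry.of_dist_eq (hiso g)⟩
  set orbit := {f : M → K | ∃ g : G, f = fun p => c (g⁻¹ • p)}
  have horbit : ∀ f ∈ orbit, LipschitzWith 1 f := by
    rintro _ ⟨g, rfl⟩
    exact (g • (⟨c, hc⟩ : OneLipschitzMap M K)).2
  obtain ⟨x, hx, hfix⟩ :=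
    hEA.exists_fixed_mem_closure_orbit (⟨c, hc⟩ : OneLipschitzMap M K)
  have hx_mem : x.1 ∈ closure orbit := by
    refine closure_mono ?_ (image_closure_subset_closure_image continuous_subtype_val ⟨x, hx, rfl⟩)
    rintro _ ⟨_, ⟨g, rfl⟩, rfl⟩
    exact ⟨g, rfl⟩
  refine ⟨x.1, x.2, hx_mem, fun g p => ?_, fun F hF ε hε => ?_⟩
  · simpa using congrFun (congrArg Subtype.val (hfix g⁻¹)) p
  obtain ⟨_, ⟨g, rfl⟩, hg⟩ := exists_forall_dist_lt_of_mem_closure horbit x.2 hx_mem hF hε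
  exact ⟨g⁻¹, hg⟩
end

section
/- Let 𝔽 be a finite field. A full-rank k×n matrix A over 𝔽 (k ≤ n) is in reduced row echelon form if and only if: the linear map T : 𝔽ⁿ → 𝔽ᵏ represented by A in the standard bases is a rigid surjection with respect to the antilexicographic orders on 𝔽ⁿ and 𝔽ᵏ (induced by an order on 𝔽 with 0 < 1 first), and for every i < k some column of A equals the standard unit vector u_i. -/
/-!
A vector that is antilexicographically below the unit vector `u_l` vanishes at all coordinates
`≥ l`; this is where `0 < 1` being the two least elements of `𝔽` enters.

If `T = A ·` is a rigid surjection, every `s < A u_l` has a preimage below `u_l`, so `s` lies in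
the span of the columns before `l`. Hence the first column of `A` outside
`span {u_m : m < i}` has every vector below it inside that span, which forces it to be `u_i`;
these columns are the pivots of an RREF.

Conversely, if `A` is in RREF with pivots `j`, the vector carrying `s i` at coordinate `j i` and
`0` elsewhere is the antilexicographically least preimage of `s`, and this lift is strictly
monotone; this is exactly rigidity.
-/

/-- The antilexicographic strict order on `Fin n → 𝔽` induced by an order on `𝔽`:
`x < y` iff at the largest coordinate where they differ, `x` is smaller. -/
def AntilexLT {𝔽 : Type} [LT 𝔽] {n : ℕ} (x y : Fin n → 𝔽) : Prop :=
  ∃ i, x i < y i ∧ ∀ j, i < j → x j = y j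

/-- A rigid surjection with respect to given strict orders: a surjection such that the
minimum of the preimage of `s₀` is below the minimum of the preimage of `s₁` whenever
`s₀ < s₁` (expressed via: some preimage point of `s₀` is below all preimage points of `s₁`). -/
def IsRigidSurjectionRel {α β : Type*} (ltα : α → α → Prop) (ltβ : β → β → Prop)
    (f : α → β) : Prop :=
  Function.Surjective f ∧
    ∀ s₀ s₁ : β, ltβ s₀ s₁ → ∃ a, f a = s₀ ∧ ∀ b, f b = s₁ → ltα a b

/-- A full-rank `k × n` matrix is in reduced row echelon form: there is a strictly
increasing sequence of pivot columns `j i` with `A · u_{j i} = u_i` and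
`span {A · u_l : l < j i} = span {u_l : l < i}` for all `i < k`. -/
def IsRREF {𝔽 : Type} [Field 𝔽] {k n : ℕ} (A : Matrix (Fin k) (Fin n) 𝔽) : Prop :=
  ∃ j : Fin k → Fin n, StrictMono j ∧
    (∀ i : Fin k, (fun i' => A i' (j i)) = Pi.single i 1) ∧
    ∀ i : Fin k,
      Submodule.span 𝔽 {v : Fin k → 𝔽 | ∃ l : Fin n, l < j i ∧ v = fun i' => A i' l} =
      Submodule.span 𝔽 {v : Fin k → 𝔽 | ∃ l : Fin k, l < i ∧ v = Pi.single l 1}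

open Function Submodule Matrix

section Antilex

variable {β : Type} {n : ℕ}

theorem antilexLT_iff_toColex_lt [LT β] {x y : Fin n → β} :
    AntilexLT x y ↔ toColex x < toColex y :=
  ⟨fun ⟨i, hlt, hagree⟩ => ⟨i, hagree, hlt⟩, fun ⟨i, hagree, hlt⟩ => ⟨i, hlt, hagree⟩⟩

theorem AntilexLT.trans_not_antilexLT [LinearOrder β] {x y z : Fin n → β}
    (hxy : AntilexLT x y) (hzy : ¬AntilexLT z y) : AntilexLT x z := by
  rw [antilexLT_iff_toColex_lt] at *
  exact hxy.trans_le (not_lt.1 hzy)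

theorem antilexLT_or_antilexLT_of_ne [LinearOrder β] {x y : Fin n → β} (h : x ≠ y) :
    AntilexLT x y ∨ AntilexLT y x := by
  simp only [antilexLT_iff_toColex_lt]
  exact lt_or_gt_of_ne (toColex_inj.not.2 h)

variable [Zero β] [One β]

theorem eq_zero_of_antilexLT_single [Preorder β] (h0 : ∀ x : β, 0 ≤ x)
    (h1 : ∀ x : β, x ≠ 0 → 1 ≤ x) {a : Fin n → β} {l : Fin n}
    (h : AntilexLT a (Pi.single l 1)) : ∀ q, l ≤ q → a q = 0 := by
  obtain ⟨p, hlt, hagree⟩ := h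
  obtain rfl : p = l := by
    by_contra hpl
    rw [Pi.single_eq_of_ne hpl] at hlt
    exact (h0 _).not_gt hlt
  intro q hq
  rcases hq.eq_or_lt with rfl | hq
  · by_contra hne
    rw [Pi.single_eq_same] at hlt
    exact (h1 _ hne).not_gt hlt
  · rw [hagree q hq, Pi.single_eq_of_ne hq.ne']

theorem eq_single_of_forall_antilexLT [LinearOrder β] [NeZero (1 : β)]
    (h0 : ∀ x : β, 0 ≤ x) (h1 : ∀ x : β, x ≠ 0 → 1 ≤ x) {c : Fin n → β} {i : Fin n}
    (hlow : ∀ s, AntilexLT s c → ∀ q, i ≤ q → s q = 0)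
    (hc : ∃ q, i ≤ q ∧ c q ≠ 0) : c = Pi.single i 1 := by
  by_contra hne
  rcases antilexLT_or_antilexLT_of_ne hne with hlt | hlt
  · obtain ⟨q, hq, hcq⟩ := hc
    exact hcq (eq_zero_of_antilexLT_single h0 h1 hlt q hq)
  · simpa using hlow _ hlt i le_rfl

end Antilex

theorem Matrix.mulVec_mem_of_col_mem {m n R : Type*} [Fintype n] [CommSemiring R]
    {A : Matrix m n R} {p : Submodule R (m → R)} {a : n → R}
    (h : ∀ q, a q ≠ 0 → A.col q ∈ p) : A *ᵥ a ∈ p := by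
  rw [Matrix.mulVec_eq_sum]
  refine sum_mem fun q _ => ?_
  by_cases hq : a q = 0
  · simp [hq]
  · simpa [col] using p.smul_mem (a q) (h q hq)

section LowerSpans

variable {R : Type*} [CommSemiring R] {k n : ℕ}

-- `lowerColSpan A (j i) = lowerCoordSpan R i` is, unfolded, the span condition of `IsRREF`.
variable (R) in
def lowerCoordSpan (i : Fin k) : Submodule R (Fin k → R) :=
  span R {v | ∃ l, l < i ∧ v = Pi.single l 1}

def lowerColSpan (A : Matrix (Fin k) (Fin n) R) (l : Fin n) : Submodule R (Fin k → R) :=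
  span R {v | ∃ q, q < l ∧ v = A.col q}

theorem mem_lowerCoordSpan_iff {i : Fin k} {v : Fin k → R} :
    v ∈ lowerCoordSpan R i ↔ ∀ q, i ≤ q → v q = 0 := by
  have hset : {v | ∃ l, l < i ∧ v = Pi.single l 1} = Pi.basisFun R (Fin k) '' Set.Iio i := by
    ext v
    simp [eq_comm]
  rw [lowerCoordSpan, hset, Module.Basis.mem_span_image]
  simp [Set.subset_def, not_imp_comm]

theorem lowerCoordSpan_mono {i i' : Fin k} (h : i ≤ i') :
    lowerCoordSpan R i ≤ lowerCoordSpan R i' :=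
  span_mono fun _ ⟨l, hl, hv⟩ => ⟨l, hl.trans_le h, hv⟩

theorem single_mem_lowerCoordSpan {l i : Fin k} (h : l < i) :
    Pi.single l 1 ∈ lowerCoordSpan R i :=
  subset_span ⟨l, h, rfl⟩

theorem col_mem_lowerColSpan {A : Matrix (Fin k) (Fin n) R} {q l : Fin n} (h : q < l) :
    A.col q ∈ lowerColSpan A l :=
  subset_span ⟨q, h, rfl⟩

theorem mulVec_mem_lowerColSpan {A : Matrix (Fin k) (Fin n) R} {l : Fin n} {a : Fin n → R}
    (ha : ∀ q, l ≤ q → a q = 0) : A *ᵥ a ∈ lowerColSpan A l :=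
  mulVec_mem_of_col_mem fun q hq =>
    col_mem_lowerColSpan (not_le.1 fun hlq => hq (ha q hlq))

theorem exists_first_col_not_mem_lowerCoordSpan [Nontrivial R] {A : Matrix (Fin k) (Fin n) R}
    (hA : Surjective A.mulVec) (i : Fin k) :
    ∃ l, A.col l ∉ lowerCoordSpan R i ∧ ∀ q < l, A.col q ∈ lowerCoordSpan R i := by
  have hex : ∃ l, A.col l ∉ lowerCoordSpan R i := by
    by_contra! hall
    obtain ⟨a, ha⟩ := hA (Pi.single i 1)
    have := mulVec_mem_of_col_mem (a := a) fun q _ => hall q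
    rw [ha, mem_lowerCoordSpan_iff] at this
    simpa using this i le_rfl
  obtain ⟨l, hl, hmin⟩ := wellFounded_lt.has_min {l | A.col l ∉ lowerCoordSpan R i} hex
  exact ⟨l, hl, fun q hq => not_not.1 fun h => hmin q h hq⟩

end LowerSpans

section Backward

variable {k n : ℕ}

theorem mem_lowerColSpan_of_antilexLT_col {R : Type} [CommSemiring R] [LinearOrder R]
    {A : Matrix (Fin k) (Fin n) R} (h0 : ∀ x : R, 0 ≤ x) (h1 : ∀ x : R, x ≠ 0 → 1 ≤ x)
    (hA : IsRigidSurjectionRel AntilexLT AntilexLT A.mulVec) {l : Fin n} {s : Fin k → R}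
    (hs : AntilexLT s (A.col l)) : s ∈ lowerColSpan A l := by
  obtain ⟨a, rfl, hmin⟩ := hA.2 s _ hs
  exact mulVec_mem_lowerColSpan
    (eq_zero_of_antilexLT_single h0 h1 (hmin _ (mulVec_single_one A l)))

theorem isRREF_of_isRigidSurjection {𝔽 : Type} [Field 𝔽] [LinearOrder 𝔽]
    (h0 : ∀ x : 𝔽, 0 ≤ x) (h1 : ∀ x : 𝔽, x ≠ 0 → 1 ≤ x) {A : Matrix (Fin k) (Fin n) 𝔽}
    (hA : IsRigidSurjectionRel AntilexLT AntilexLT A.mulVec) : IsRREF A := by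
  choose j hj_not hj_min using exists_first_col_not_mem_lowerCoordSpan hA.1
  have hcol_le : ∀ i, lowerColSpan A (j i) ≤ lowerCoordSpan 𝔽 i := fun i =>
    span_le.2 fun _ ⟨q, hq, hv⟩ => hv ▸ hj_min i q hq
  have hpiv : ∀ i, A.col (j i) = Pi.single i 1 := fun i =>
    eq_single_of_forall_antilexLT h0 h1
      (fun _ hs => mem_lowerCoordSpan_iff.1
        (hcol_le i (mem_lowerColSpan_of_antilexLT_col h0 h1 hA hs)))
      (by simpa [mem_lowerCoordSpan_iff] using hj_not i)
  have hmono : StrictMono j := by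
    intro i i' hii'
    by_contra! hle
    apply hj_not i'
    rcases hle.lt_or_eq with hlt | heq
    · exact lowerCoordSpan_mono hii'.le (hj_min i _ hlt)
    · rw [heq, hpiv]
      exact single_mem_lowerCoordSpan hii'
  refine ⟨j, hmono, hpiv, fun i => (hcol_le i).antisymm (span_le.2 ?_)⟩
  rintro _ ⟨l, hl, rfl⟩
  rw [← hpiv l]
  exact col_mem_lowerColSpan (hmono hl)

end Backward

section Forward

variable {k n : ℕ} {j : Fin k → Fin n}

section PivotLift

variable {M : Type*} [AddCommMonoid M]

def pivotLift (j : Fin k → Fin n) (s : Fin k → M) : Fin n → M :=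
  ∑ i, Pi.single (j i) (s i)

theorem pivotLift_apply_pivot (hj : Injective j) (s : Fin k → M) (i : Fin k) :
    pivotLift j s (j i) = s i := by
  simp [pivotLift, Pi.single_apply, hj.eq_iff]

theorem pivotLift_apply_of_forall_ne {q : Fin n} (hq : ∀ i, j i ≠ q) (s : Fin k → M) :
    pivotLift j s q = 0 := by
  simp [pivotLift, (hq _).symm]

end PivotLift

section Semiring

variable {R : Type*} [NonAssocSemiring R] {A : Matrix (Fin k) (Fin n) R}

theorem mulVec_pivotLift (hpiv : ∀ i, A.col (j i) = Pi.single i 1) (s : Fin k → R) :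
    A *ᵥ pivotLift j s = s := by
  ext i'
  simp [pivotLift, mulVec_sum, hpiv, Pi.single_apply]

theorem mulVec_apply_eq_of_pivot (hpiv : ∀ i, A.col (j i) = Pi.single i 1)
    (hzero : ∀ i, ∀ l < j i, A i l = 0) {x : Fin n → R} {i : Fin k}
    (hx : ∀ q, j i < q → x q = 0) : (A *ᵥ x) i = x (j i) := by
  rw [mulVec, dotProduct, Finset.sum_eq_single (j i)]
  · simp [← col_apply, hpiv]
  · intro q _ hq
    rcases hq.lt_or_gt with hlt | hgt
    · simp [hzero i q hlt]
    · simp [hx q hgt]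
  · simp

end Semiring

theorem AntilexLT.pivotLift {R : Type} [AddCommMonoid R] [LinearOrder R] (hj : StrictMono j)
    {s₀ s₁ : Fin k → R} (h : AntilexLT s₀ s₁) :
    AntilexLT (pivotLift j s₀) (pivotLift j s₁) := by
  obtain ⟨i, hlt, hagree⟩ := h
  refine ⟨j i, by simpa [pivotLift_apply_pivot hj.injective], fun q hq => ?_⟩
  by_cases hpiv : ∃ i', j i' = q
  · obtain ⟨i', rfl⟩ := hpiv
    simp [pivotLift_apply_pivot hj.injective, hagree i' (hj.lt_iff_lt.1 hq)]
  · push Not at hpiv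
    simp [pivotLift_apply_of_forall_ne hpiv]

variable {R : Type} [Ring R] [LinearOrder R] {A : Matrix (Fin k) (Fin n) R}

theorem not_antilexLT_pivotLift_mulVec (h0 : ∀ x : R, 0 ≤ x)
    (hpiv : ∀ i, A.col (j i) = Pi.single i 1) (hzero : ∀ i, ∀ l < j i, A i l = 0)
    (b : Fin n → R) : ¬AntilexLT b (pivotLift j (A *ᵥ b)) := by
  rintro ⟨p, hlt, hagree⟩
  by_cases hp : ∃ i, j i = p
  · obtain ⟨i, rfl⟩ := hp
    have hrow := mulVec_apply_eq_of_pivot hpiv hzero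
      (x := pivotLift j (A *ᵥ b) - b) fun q hq => sub_eq_zero.2 (hagree q hq).symm
    rw [mulVec_sub, mulVec_pivotLift hpiv, sub_self] at hrow
    exact hlt.ne (sub_eq_zero.1 hrow.symm).symm
  · push Not at hp
    rw [pivotLift_apply_of_forall_ne hp] at hlt
    exact (h0 _).not_gt hlt

theorem isRigidSurjection_of_pivots (h0 : ∀ x : R, 0 ≤ x) (hj : StrictMono j)
    (hpiv : ∀ i, A.col (j i) = Pi.single i 1) (hzero : ∀ i, ∀ l < j i, A i l = 0) :
    IsRigidSurjectionRel AntilexLT AntilexLT A.mulVec := by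
  refine ⟨fun s => ⟨_, mulVec_pivotLift hpiv s⟩, fun s₀ s₁ h => ⟨_, mulVec_pivotLift hpiv s₀, ?_⟩⟩
  rintro b rfl
  exact (h.pivotLift hj).trans_not_antilexLT
    (not_antilexLT_pivotLift_mulVec h0 hpiv hzero b)

end Forward

theorem isRREF_iff_rigidSurjection_general
    (𝔽 : Type) [Field 𝔽] [LinearOrder 𝔽]
    (h0 : ∀ x : 𝔽, (0 : 𝔽) ≤ x) (h1 : ∀ x : 𝔽, x ≠ 0 → (1 : 𝔽) ≤ x)
    (k n : ℕ) (A : Matrix (Fin k) (Fin n) 𝔽) :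
    IsRREF A ↔
      (IsRigidSurjectionRel (AntilexLT (𝔽 := 𝔽)) (AntilexLT (𝔽 := 𝔽)) A.mulVec ∧
        ∀ i : Fin k, ∃ l : Fin n, (fun i' => A i' l) = Pi.single i 1) := by
  refine ⟨fun ⟨j, hj, hpiv, hspan⟩ => ⟨isRigidSurjection_of_pivots h0 hj hpiv ?_,
    fun i => ⟨j i, hpiv i⟩⟩, fun h => isRREF_of_isRigidSurjection h0 h1 h.1⟩
  intro i l hl
  have hmem : A.col l ∈ lowerCoordSpan 𝔽 i := (hspan i).le (col_mem_lowerColSpan hl)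
  exact mem_lowerCoordSpan_iff.1 hmem i le_rfl

/-- Over a finite field `𝔽` ordered so that `0 < 1` are the first two elements, a full-rank
`k × n` matrix `A` is in RREF iff the linear map `x ↦ A.mulVec x : 𝔽ⁿ → 𝔽ᵏ` is a rigid
surjection with respect to the antilexicographic orders and every standard unit vector
`u_i` of `𝔽ᵏ` appears as a column of `A`. -/
theorem isRREF_iff_rigidSurjection
    (𝔽 : Type) [Field 𝔽] [Fintype 𝔽] [LinearOrder 𝔽]
    (h0 : ∀ x : 𝔽, (0 : 𝔽) ≤ x) (h1 : ∀ x : 𝔽, x ≠ 0 → (1 : 𝔽) ≤ x)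
    (k n : ℕ) (hkn : k ≤ n) (A : Matrix (Fin k) (Fin n) 𝔽) (hrank : A.rank = k) :
    IsRREF A ↔
      (IsRigidSurjectionRel (AntilexLT (𝔽 := 𝔽)) (AntilexLT (𝔽 := 𝔽)) A.mulVec ∧
        ∀ i : Fin k, ∃ l : Fin n, (fun i' => A i' l) = Pi.single i 1) :=
  isRREF_iff_rigidSurjection_general 𝔽 h0 h1 k n A
end

section
/- Let X and Y be finite-dimensional normed spaces and T : X → Y a injective linear operator with 1 ≤ ‖T‖ and 1 ≤ ‖T⁻¹‖ (where ‖T⁻¹‖ is the norm of the inverse of T : X → T(X)). Then there exists a normed space Z with dim Z ≤ dim X · dim Y and linear isometric embeddings I : X → Z and J : Y → Z such that ‖I − J∘T‖ ≤ ‖T‖·‖T⁻¹‖ − 1. -/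
/-!
Put `c = ‖T‖‖T⁻¹‖ - 1 ≥ 0` and give `X × Y` the seminorm
`q (x, y) = ⨅ u, ‖x - u‖ + ‖y + T u‖ + c‖u‖`; `Z` is its separation quotient, and `I`, `J` are
induced by the two inclusions. The choice `u = x` gives `q (x, -T x) ≤ c‖x‖`. The inclusions are
isometric because `‖T u‖ ≤ (1 + c)‖u‖` and, as `‖T‖, ‖T⁻¹‖ ≥ 1`, `‖u‖ ≤ ‖T u‖ + c‖u‖`.
Finally `dim Z ≤ dim X + dim Y ≤ dim X · dim Y` unless `dim X = 1`; then `‖T‖‖T⁻¹‖ = 1`, so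
`c = 0`, the graph of `-T` lies in the kernel of `X × Y → Z`, and `dim Z ≤ dim Y`.
-/

open Module
open scoped NNReal

universe u

theorem Seminorm.exists_normedSpace_surjective_norm_eq {𝕜 : Type*} {E : Type u} [NormedField 𝕜]
    [AddCommGroup E] [Module 𝕜 E] (p : Seminorm 𝕜 E) :
    ∃ (Z : Type u) (_ : NormedAddCommGroup Z) (_ : NormedSpace 𝕜 Z) (f : E →ₗ[𝕜] Z),
      Function.Surjective f ∧ ∀ e, ‖f e‖ = p e := by
  let : SeminormedAddCommGroup E := p.toAddGroupSeminorm.toSeminormedAddCommGroup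
  let : NormedSpace 𝕜 E := { norm_smul_le := fun r e => (map_smul_eq_mul p r e).le }
  exact ⟨SeparationQuotient E, inferInstance, inferInstance,
    (SeparationQuotient.mkCLM 𝕜 E).toLinearMap, SeparationQuotient.surjective_mk, fun _ => rfl⟩

theorem LinearMap.finrank_add_finrank_le_of_le_ker {K V W : Type*} [DivisionRing K]
    [AddCommGroup V] [Module K V] [FiniteDimensional K V] [AddCommGroup W] [Module K W]
    (f : V →ₗ[K] W) (hf : Function.Surjective f) {U : Submodule K V} (hU : U ≤ ker f) :
    finrank K W + finrank K U ≤ finrank K V := by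
  rw [← f.finrank_range_add_finrank_ker, range_eq_top.mpr hf, finrank_top]
  exact Nat.add_le_add_left (Submodule.finrank_mono hU) _

section Correcting

variable {𝕜 X Y : Type*} [NormedField 𝕜] [SeminormedAddCommGroup X] [NormedSpace 𝕜 X]
  [SeminormedAddCommGroup Y] [NormedSpace 𝕜 Y]

/-- The infimal convolution of `‖a‖ + ‖b‖` with `c‖u‖ + ‖v + T u‖`; minimizing over `v` first
shows it equals `(x, y) ↦ ⨅ u, ‖x - u‖ + ‖y + T u‖ + c‖u‖`. -/
noncomputable def correctingSeminorm (T : X →ₗ[𝕜] Y) (c : ℝ≥0) : Seminorm 𝕜 (X × Y) :=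
  ((normSeminorm 𝕜 X).comp (LinearMap.fst 𝕜 X Y) + (normSeminorm 𝕜 Y).comp (LinearMap.snd 𝕜 X Y)) ⊓
    (c • (normSeminorm 𝕜 X).comp (LinearMap.fst 𝕜 X Y) +
      (normSeminorm 𝕜 Y).comp (LinearMap.snd 𝕜 X Y + T ∘ₗ LinearMap.fst 𝕜 X Y))

variable (T : X →ₗ[𝕜] Y) (c : ℝ≥0)

theorem correctingSeminorm_apply (w : X × Y) :
    correctingSeminorm T c w =
      ⨅ v : X × Y, ‖v.1‖ + ‖v.2‖ + (c * ‖w.1 - v.1‖ + ‖w.2 - v.2 + T (w.1 - v.1)‖) := by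
  simp [correctingSeminorm, NNReal.smul_def]

theorem correctingSeminorm_le_norm_add_norm (w : X × Y) :
    correctingSeminorm T c w ≤ ‖w.1‖ + ‖w.2‖ := by
  unfold correctingSeminorm
  exact (Seminorm.le_def.mp (inf_le_left (α := Seminorm 𝕜 (X × Y))) w).trans_eq (by simp)

theorem correctingSeminorm_graph_le (x : X) : correctingSeminorm T c (x, -T x) ≤ c * ‖x‖ := by
  unfold correctingSeminorm
  exact (Seminorm.le_def.mp (inf_le_right (α := Seminorm 𝕜 (X × Y))) (x, -T x)).trans_eq
    (by simp [NNReal.smul_def])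

theorem correctingSeminorm_inl (h : ∀ u, ‖u‖ ≤ ‖T u‖ + c * ‖u‖) (x : X) :
    correctingSeminorm T c (x, 0) = ‖x‖ := by
  refine le_antisymm (by simpa using correctingSeminorm_le_norm_add_norm T c (x, 0)) ?_
  rw [correctingSeminorm_apply]
  refine le_ciInf fun ⟨a, b⟩ => ?_
  dsimp only
  rw [zero_sub, neg_add_eq_sub]
  linarith [h (x - a), norm_le_norm_add_norm_sub' x a, norm_le_norm_add_norm_sub' (T (x - a)) b]

theorem correctingSeminorm_inr (h : ∀ u, ‖T u‖ ≤ (1 + c) * ‖u‖) (y : Y) :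
    correctingSeminorm T c (0, y) = ‖y‖ := by
  refine le_antisymm (by simpa using correctingSeminorm_le_norm_add_norm T c (0, y)) ?_
  rw [correctingSeminorm_apply]
  refine le_ciInf fun ⟨a, b⟩ => ?_
  dsimp only
  rw [zero_sub, map_neg, norm_neg, ← sub_eq_add_neg]
  have hy : ‖y‖ ≤ ‖b‖ + ‖y - b - T a‖ + ‖T a‖ :=
    (norm_add₃_le (a := b) (b := y - b - T a) (c := T a)).trans_eq' (by congr 1; abel)
  linarith [h a]

end Correcting

theorem ContinuousLinearMap.norm_apply_eq_opNorm_mul_of_finrank_eq_one {𝕜 E F : Type*}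
    [NontriviallyNormedField 𝕜] [NormedAddCommGroup E] [NormedSpace 𝕜 E]
    [SeminormedAddCommGroup F] [NormedSpace 𝕜 F] (f : E →L[𝕜] F) (h : finrank 𝕜 E = 1)
    (x : E) : ‖f x‖ = ‖f‖ * ‖x‖ := by
  refine le_antisymm (f.le_opNorm x) ?_
  rcases eq_or_ne x 0 with rfl | hx
  · simp
  have hx' : 0 < ‖x‖ := norm_pos_iff.mpr hx
  have hbound : ‖f‖ ≤ ‖f x‖ / ‖x‖ := f.opNorm_le_bound (by positivity) fun y => by
    obtain ⟨r, rfl⟩ := (finrank_eq_one_iff_of_nonzero' x hx).mp h y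
    rw [map_smul, norm_smul, norm_smul]
    exact le_of_eq (by field_simp)
  rwa [le_div_iff₀ hx'] at hbound

section InverseOnRange

variable {𝕜 X Y : Type*} [NontriviallyNormedField 𝕜] [CompleteSpace 𝕜]
  [NormedAddCommGroup X] [NormedSpace 𝕜 X] [FiniteDimensional 𝕜 X]
  [NormedAddCommGroup Y] [NormedSpace 𝕜 Y] {T : X →ₗ[𝕜] Y} (hT : Function.Injective T)

theorem LinearMap.norm_le_opNorm_ofInjective_symm_mul (x : X) :
    ‖x‖ ≤ ‖(LinearEquiv.ofInjective T hT).symm.toLinearMap.toContinuousLinearMap‖ * ‖T x‖ := by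
  simpa using ((LinearEquiv.ofInjective T hT).symm.toLinearMap.toContinuousLinearMap).le_opNorm
    (LinearEquiv.ofInjective T hT x)

theorem LinearMap.opNorm_mul_opNorm_ofInjective_symm_of_finrank_eq_one
    (h : finrank 𝕜 X = 1) :
    ‖T.toContinuousLinearMap‖ *
      ‖(LinearEquiv.ofInjective T hT).symm.toLinearMap.toContinuousLinearMap‖ = 1 := by
  obtain ⟨x, hx⟩ := (finrank_pos_iff_exists_ne_zero (R := 𝕜) (M := X)).mp (by omega)
  have hTx := T.toContinuousLinearMap.norm_apply_eq_opNorm_mul_of_finrank_eq_one h x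
  have hSx := ((LinearEquiv.ofInjective T hT).symm.toLinearMap.toContinuousLinearMap
    ).norm_apply_eq_opNorm_mul_of_finrank_eq_one ((finrank_range_of_inj hT).trans h)
    (LinearEquiv.ofInjective T hT x)
  simp only [coe_toContinuousLinearMap', LinearEquiv.coe_coe, LinearEquiv.symm_apply_apply,
    LinearEquiv.ofInjective_apply, Submodule.coe_norm] at hTx hSx
  rw [hTx] at hSx
  exact mul_right_cancel₀ (norm_ne_zero_iff.mpr hx) (by linarith)

end InverseOnRange

theorem finrank_le_finrank_mul_finrank_of_surjective_prod {K X Y Z : Type*} [DivisionRing K]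
    [AddCommGroup X] [Module K X] [FiniteDimensional K X]
    [AddCommGroup Y] [Module K Y] [FiniteDimensional K Y] [AddCommGroup Z] [Module K Z]
    {T : X →ₗ[K] Y} (hT : Function.Injective T) (hX : finrank K X ≠ 0)
    (f : X × Y →ₗ[K] Z) (hf : Function.Surjective f)
    (hgraph : finrank K X = 1 → ∀ x, f (x, -T x) = 0) :
    finrank K Z ≤ finrank K X * finrank K Y := by
  have hXY := LinearMap.finrank_le_finrank_of_injective hT
  by_cases h1 : finrank K X = 1
  · have hker : LinearMap.range (LinearMap.id.prod (-T)) ≤ LinearMap.ker f := by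
      rintro _ ⟨x, rfl⟩
      exact hgraph h1 x
    have := f.finrank_add_finrank_le_of_le_ker hf hker
    rw [LinearMap.finrank_range_of_inj fun x y h => congrArg Prod.fst h, finrank_prod] at this
    rw [h1] at this ⊢
    omega
  · have := f.finrank_add_finrank_le_of_le_ker hf (bot_le (a := LinearMap.ker f))
    rw [finrank_bot, finrank_prod] at this
    have := Nat.mul_le_mul_right (finrank K Y) (show 2 ≤ finrank K X by omega)
    omega

/-- Given finite-dimensional normed spaces `X`, `Y` and an injective linear map
`T : X → Y` with `1 ≤ ‖T‖` and `1 ≤ ‖T⁻¹‖` (the norm of the inverse of `T : X → T(X)`),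
there is a normed space `Z` of dimension at most `dim X · dim Y` together with linear
isometric embeddings `I : X → Z`, `J : Y → Z` such that `‖I − J ∘ T‖ ≤ ‖T‖·‖T⁻¹‖ − 1`. -/
theorem exists_correcting_space
    (X Y : Type) [NormedAddCommGroup X] [NormedSpace ℝ X] [FiniteDimensional ℝ X]
    [NormedAddCommGroup Y] [NormedSpace ℝ Y] [FiniteDimensional ℝ Y]
    (T : X →ₗ[ℝ] Y) (hT : Function.Injective ⇑T)
    (hnT : 1 ≤ ‖LinearMap.toContinuousLinearMap T‖)
    (hnTinv : 1 ≤ ‖LinearMap.toContinuousLinearMap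
      ((LinearEquiv.ofInjective T hT).symm.toLinearMap)‖) :
    ∃ (Z : Type) (_ : NormedAddCommGroup Z) (_ : NormedSpace ℝ Z),
      FiniteDimensional ℝ Z ∧
      Module.finrank ℝ Z ≤ Module.finrank ℝ X * Module.finrank ℝ Y ∧
      ∃ (I : X →ₗ[ℝ] Z) (J : Y →ₗ[ℝ] Z),
        (∀ x, ‖I x‖ = ‖x‖) ∧ (∀ y, ‖J y‖ = ‖y‖) ∧
        ∀ x, ‖I x - J (T x)‖ ≤
          (‖LinearMap.toContinuousLinearMap T‖ *
            ‖LinearMap.toContinuousLinearMap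
              ((LinearEquiv.ofInjective T hT).symm.toLinearMap)‖ - 1) * ‖x‖ := by
  have hX : finrank ℝ X ≠ 0 := fun h0 => by
    have := finrank_zero_iff.mp h0
    rw [ContinuousLinearMap.opNorm_subsingleton] at hnT
    norm_num at hnT
  set a := ‖LinearMap.toContinuousLinearMap T‖
  set b := ‖LinearMap.toContinuousLinearMap ((LinearEquiv.ofInjective T hT).symm.toLinearMap)‖
  have hTle : ∀ u, ‖T u‖ ≤ a * ‖u‖ := (LinearMap.toContinuousLinearMap T).le_opNorm
  have hTge : ∀ u, ‖u‖ ≤ b * ‖T u‖ := T.norm_le_opNorm_ofInjective_symm_mul hT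
  obtain ⟨c, hc⟩ : ∃ c : ℝ≥0, (c : ℝ) = a * b - 1 := ⟨⟨a * b - 1, by nlinarith⟩, rfl⟩
  obtain ⟨Z, _, _, f, hf, hfq⟩ := (correctingSeminorm T c).exists_normedSpace_surjective_norm_eq
  have hgraph (x : X) : ‖f (x, -T x)‖ ≤ (a * b - 1) * ‖x‖ :=
    hc ▸ (hfq _).trans_le (correctingSeminorm_graph_le T c x)
  refine ⟨Z, _, _, .of_surjective f hf, ?_, f ∘ₗ .inl ℝ X Y, f ∘ₗ .inr ℝ X Y,
    fun x => ?_, fun y => ?_, fun x => ?_⟩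
  · refine finrank_le_finrank_mul_finrank_of_surjective_prod hT hX f hf fun h1 x =>
      norm_le_zero_iff.mp ?_
    have hab : a * b = 1 := T.opNorm_mul_opNorm_ofInjective_symm_of_finrank_eq_one hT h1
    simpa [hab] using hgraph x
  · refine (hfq _).trans (correctingSeminorm_inl T c (fun u => ?_) x)
    -- `b (‖T u‖ + (a b - 2)‖u‖) ≥ (a b² - 2 b + 1)‖u‖ ≥ (b - 1)²‖u‖ ≥ 0`
    rw [hc]
    nlinarith [hTge u, hTle u, norm_nonneg u, norm_nonneg (T u)]
  · refine (hfq _).trans (correctingSeminorm_inr T c (fun u => ?_) y)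
    rw [hc]
    nlinarith [hTle u, mul_nonneg (mul_nonneg (by linarith : 0 ≤ a) (sub_nonneg.mpr hnTinv))
      (norm_nonneg u)]
  · simpa [← map_sub] using hgraph x
end

section
/- For every k-dimensional normed space X, every 0 < ε ≤ 1, and every ε-separated subset A of the unit sphere of X, there exists a set D with {0} ∪ A ⊆ D ⊆ Ball(X) which is ε-dense in Ball(X), has |D| ≤ (1 + 4/ε)^k, and such that for every nonzero x ∈ Ball(X) there exists y ∈ D with ‖x − y‖ < ε and ‖y‖ < ‖x‖. -/
/-!
Take, by Zorn's lemma, a maximal subset `D` of the unit ball that contains `{0} ∪ A` and whose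
points are pairwise at distance `≥ ε/2`. Maximality puts every point of the ball at distance
`< ε/2` from `D` (strictly, because the separation is non-strict; the last step needs both).
The open balls of radius `ε/4` around the points of `D` are disjoint and lie in the ball of
radius `1 + ε/4`, so comparing Haar measures gives `|D| ≤ (1 + 4/ε)^k`. Finally, for `x ≠ 0`
with `‖x‖ ≥ ε`, a point of `D` that is `ε/2`-close to the point of norm `‖x‖ - ε/2` on the
segment `[0, x]` is `ε`-close to `x` and shorter than `x`; if `‖x‖ < ε`, take `0`.
-/

open Metric Set MeasureTheory Module

theorem Set.Pairwise.insert_center_of_subset_sphere {X : Type*} [PseudoMetricSpace X]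
    {A : Set X} {c : X} {r δ : ℝ} (hsep : A.Pairwise (δ ≤ dist · ·))
    (hA : A ⊆ sphere c r) (hδ : δ ≤ r) :
    (insert c A).Pairwise (δ ≤ dist · ·) := by
  refine hsep.insert fun a ha _ => ?_
  have hca : dist c a = r := by rw [dist_comm]; exact hA ha
  exact ⟨hca ▸ hδ, dist_comm c a ▸ hca ▸ hδ⟩

theorem exists_pairwise_le_dist_forall_dist_lt {X : Type*} [PseudoMetricSpace X]
    {s t : Set X} {δ : ℝ} (hδ : 0 < δ) (hst : s ⊆ t) (hs : s.Pairwise (δ ≤ dist · ·)) :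
    ∃ D, s ⊆ D ∧ D ⊆ t ∧ D.Pairwise (δ ≤ dist · ·) ∧ ∀ z ∈ t, ∃ y ∈ D, dist z y < δ := by
  obtain ⟨D, hsD, hmax⟩ := zorn_subset_nonempty {D | D ⊆ t ∧ D.Pairwise (δ ≤ dist · ·)}
    (fun c hc hchain _ => ⟨⋃₀ c, ⟨sUnion_subset fun D hD => (hc hD).1,
      (pairwise_sUnion hchain.directedOn).2 fun D hD => (hc hD).2⟩,
      fun _ => subset_sUnion_of_mem⟩) s ⟨hst, hs⟩
  obtain ⟨hDt, hDsep⟩ := hmax.prop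
  refine ⟨D, hsD, hDt, hDsep, fun z hz => ?_⟩
  by_contra! hfar
  have hzD : z ∈ D := hmax.mem_of_prop_insert
    ⟨insert_subset hz hDt, hDsep.insert fun y hy _ => ⟨hfar y hy, dist_comm z y ▸ hfar y hy⟩⟩
  exact (hfar z hzD).not_gt (by simpa using hδ)

section Packing

variable {E : Type*} [NormedAddCommGroup E] [NormedSpace ℝ E] [FiniteDimensional ℝ E]


theorem Finset.card_mul_pow_le_of_pairwiseDisjoint_ball {s : Finset E} {x : E} {r ρ : ℝ}
    (hr : 0 < r) (hρ : 0 < ρ) (hd : (s : Set E).PairwiseDisjoint (ball · r))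
    (hsub : ∀ a ∈ s, ball a r ⊆ ball x ρ) :
    (s.card : ℝ) * r ^ finrank ℝ E ≤ ρ ^ finrank ℝ E := by
  borelize E
  set μ : Measure E := (finBasis ℝ E).addHaar
  have hball : ∀ a {t : ℝ}, 0 < t → μ.real (ball a t) = t ^ finrank ℝ E * μ.real (ball 0 1) :=
    fun a t ht => by
      rw [measureReal_def, μ.addHaar_ball_of_pos a ht, ENNReal.toReal_mul,
        ENNReal.toReal_ofReal (by positivity), measureReal_def]
  have hV : 0 < μ.real (ball (0 : E) 1) :=
    ENNReal.toReal_pos (measure_ball_pos μ 0 one_pos).ne' measure_ball_lt_top.ne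
  refine le_of_mul_le_mul_right ?_ hV
  calc (s.card : ℝ) * r ^ finrank ℝ E * μ.real (ball 0 1)
      = ∑ a ∈ s, μ.real (ball a r) := by simp [hball _ hr, mul_assoc]
    _ = μ.real (⋃ a ∈ s, ball a r) :=
      (measureReal_biUnion_finset hd fun _ _ => measurableSet_ball).symm
    _ ≤ μ.real (ball x ρ) := measureReal_mono (iUnion₂_subset hsub)
    _ = ρ ^ finrank ℝ E * μ.real (ball 0 1) := hball x hρ

theorem Finset.card_le_of_pairwise_le_dist {s : Finset E} {x : E} {R δ : ℝ} (hR : 0 ≤ R)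
    (hδ : 0 < δ) (hsep : (s : Set E).Pairwise (δ ≤ dist · ·)) (hs : (s : Set E) ⊆ closedBall x R) :
    (s.card : ℝ) ≤ (1 + 2 * R / δ) ^ finrank ℝ E := by
  have hdisj : (s : Set E).PairwiseDisjoint (ball · (δ / 2)) := fun a ha b hb hab =>
    ball_disjoint_ball (by linarith [hsep ha hb hab])
  have hsub : ∀ a ∈ s, ball a (δ / 2) ⊆ ball x (R + δ / 2) := fun a ha =>
    ball_subset_ball' (by linarith [mem_closedBall.1 (hs ha)])
  have hpack := card_mul_pow_le_of_pairwiseDisjoint_ball (half_pos hδ) (by positivity) hdisj hsub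
  have hratio : 1 + 2 * R / δ = (R + δ / 2) / (δ / 2) := by field_simp; ring
  rwa [hratio, div_pow, le_div_iff₀ (by positivity)]

theorem Set.Pairwise.finite_of_subset_closedBall {D : Set E} {x : E} {R δ : ℝ} (hR : 0 ≤ R)
    (hδ : 0 < δ) (hsep : D.Pairwise (δ ≤ dist · ·)) (hD : D ⊆ closedBall x R) : D.Finite := by
  by_contra hinf
  obtain ⟨s, hsD, hcard⟩ := Set.Infinite.exists_subset_card_eq hinf
    (⌊(1 + 2 * R / δ) ^ finrank ℝ E⌋₊ + 1)
  have := Nat.le_floor (Finset.card_le_of_pairwise_le_dist hR hδ (hsep.mono hsD) (hsD.trans hD))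
  omega

theorem Set.Pairwise.natCard_le_of_subset_closedBall {D : Set E} {x : E} {R δ : ℝ} (hR : 0 ≤ R)
    (hδ : 0 < δ) (hsep : D.Pairwise (δ ≤ dist · ·)) (hD : D ⊆ closedBall x R) :
    (Nat.card D : ℝ) ≤ (1 + 2 * R / δ) ^ finrank ℝ E := by
  have hfin := hsep.finite_of_subset_closedBall hR hδ hD
  rw [Nat.card_coe_set_eq, ncard_eq_toFinset_card _ hfin]
  exact Finset.card_le_of_pairwise_le_dist hR hδ (by simpa using hsep) (by simpa using hD)

end Packing

theorem exists_mem_norm_sub_lt_norm_lt {E : Type*} [NormedAddCommGroup E] [NormedSpace ℝ E]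
    {D : Set E} {R ε : ℝ} (h0 : (0 : E) ∈ D)
    (hD : ∀ z ∈ closedBall (0 : E) R, ∃ y ∈ D, dist z y < ε / 2)
    {x : E} (hxR : ‖x‖ ≤ R) (hx : x ≠ 0) : ∃ y ∈ D, ‖x - y‖ < ε ∧ ‖y‖ < ‖x‖ := by
  rcases lt_or_ge ‖x‖ ε with hsmall | hlarge
  · exact ⟨0, h0, by simpa using hsmall, by simpa using hx⟩
  have hxpos : 0 < ‖x‖ := norm_pos_iff.2 hx
  have hε : 0 < ε := by
    obtain ⟨y, -, hy⟩ := hD x (mem_closedBall_zero_iff.2 hxR)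
    linarith [dist_nonneg (x := x) (y := y)]
  set c := ε / 2 / ‖x‖
  have hc : c * ‖x‖ = ε / 2 := div_mul_cancel₀ _ hxpos.ne'
  have hc1 : c ≤ 1 := by rw [div_le_one hxpos]; linarith
  have hxz : ‖x - (1 - c) • x‖ = ε / 2 := by
    rw [show x - (1 - c) • x = c • x by module, norm_smul, Real.norm_of_nonneg (by positivity), hc]
  have hz : ‖(1 - c) • x‖ = ‖x‖ - ε / 2 := by
    rw [norm_smul, Real.norm_of_nonneg (by linarith), sub_mul, hc, one_mul]
  obtain ⟨y, hyD, hzy⟩ := hD ((1 - c) • x) (mem_closedBall_zero_iff.2 (by linarith))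
  rw [dist_eq_norm] at hzy
  refine ⟨y, hyD, ?_, ?_⟩
  · calc ‖x - y‖ ≤ ‖x - (1 - c) • x‖ + ‖(1 - c) • x - y‖ :=
          norm_sub_le_norm_sub_add_norm_sub _ _ _
      _ < ε := by linarith
  · calc ‖y‖ ≤ ‖(1 - c) • x‖ + ‖(1 - c) • x - y‖ := norm_le_norm_add_norm_sub _ _
      _ < ‖x‖ := by linarith

/-- In a `k`-dimensional real normed space `X`, for `0 < ε ≤ 1` and an `ε`-separated
subset `A` of the unit sphere, there is a set `D` with `{0} ∪ A ⊆ D ⊆ Ball(X)` which is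
`ε`-dense in the unit ball, has `|D| ≤ (1 + 4/ε)^k`, and such that every nonzero point of
the unit ball has a point of `D` within distance `< ε` and of strictly smaller norm. -/
theorem exists_good_net_of_sphere_separated
    (X : Type) [NormedAddCommGroup X] [NormedSpace ℝ X] [FiniteDimensional ℝ X]
    (ε : ℝ) (hε0 : 0 < ε) (hε1 : ε ≤ 1)
    (A : Set X) (hA : A ⊆ Metric.sphere 0 1)
    (hsep : ∀ x ∈ A, ∀ y ∈ A, x ≠ y → ε < dist x y) :
    ∃ D : Set X, insert (0 : X) A ⊆ D ∧ D ⊆ Metric.closedBall 0 1 ∧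
      (∀ b ∈ Metric.closedBall (0 : X) 1, ∃ d ∈ D, dist b d ≤ ε) ∧
      D.Finite ∧
      (Nat.card D : ℝ) ≤ (1 + 4 / ε) ^ (Module.finrank ℝ X) ∧
      ∀ x ∈ Metric.closedBall (0 : X) 1, x ≠ 0 →
        ∃ y ∈ D, ‖x - y‖ < ε ∧ ‖y‖ < ‖x‖ := by
  have hε2 : 0 < ε / 2 := half_pos hε0
  have hsepA : A.Pairwise (ε / 2 ≤ dist · ·) := fun x hx y hy hxy =>
    (half_le_self hε0.le).trans (hsep x hx y hy hxy).le
  obtain ⟨D, hAD, hDball, hDsep, hnear⟩ := exists_pairwise_le_dist_forall_dist_lt hε2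
    (insert_subset (mem_closedBall_self zero_le_one) (hA.trans sphere_subset_closedBall))
    (hsepA.insert_center_of_subset_sphere hA (by linarith))
  have hbound : 1 + 2 * 1 / (ε / 2) = 1 + 4 / ε := by field_simp; ring
  refine ⟨D, hAD, hDball, fun b hb => ?_, hDsep.finite_of_subset_closedBall zero_le_one hε2 hDball,
    hbound ▸ hDsep.natCard_le_of_subset_closedBall zero_le_one hε2 hDball,
    fun x hx hx0 => exists_mem_norm_sub_lt_norm_lt (hAD (mem_insert 0 A)) hnear
      (mem_closedBall_zero_iff.1 hx) hx0⟩
  obtain ⟨d, hdD, hbd⟩ := hnear b hb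
  exact ⟨d, hdD, by linarith⟩
end

section
/- If E is a Banach space and V, W ∈ Gr(k,E) with Λ_E(V,W) < 1/(3k), then there exists a linear isomorphism T : V → W with ‖T‖ ≤ 1 + k·Λ_E(V,W) and ‖T⁻¹‖ ≤ (1 − k·Λ_E(V,W))⁻¹ (norms with respect to the norm inherited from E); consequently the Banach–Mazur distance between (V,‖·‖_E) and (W,‖·‖_E) is at most (9/4)·k·Λ_E(V,W). -/
section Aux

lemma log_ratio_le {x : ℝ} (h0 : 0 ≤ x) (h1 : x ≤ 1/3) :
    Real.log (1 + x) - Real.log (1 - x) ≤ 9/4 * x := by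
  set f : ℝ → ℝ := fun t => 9/4 * t - (Real.log (1 + t) - Real.log (1 - t)) with hf
  have hder : ∀ t ∈ Set.Icc (0:ℝ) (1/3),
      HasDerivAt f (9/4 - (1/(1+t) - (-1)/(1-t))) t := by
    intro t ht
    have h1t : (1:ℝ) + t ≠ 0 := by simp only [Set.mem_Icc] at ht; nlinarith [ht.1, ht.2]
    have h2t : (1:ℝ) - t ≠ 0 := by simp only [Set.mem_Icc] at ht; nlinarith [ht.1, ht.2]
    have d1 : HasDerivAt (fun t : ℝ => Real.log (1 + t)) (1/(1+t)) t := by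
      simpa using (((hasDerivAt_id t).const_add 1).log h1t)
    have d2 : HasDerivAt (fun t : ℝ => Real.log (1 - t)) ((-1)/(1-t)) t := by
      simpa using (((hasDerivAt_id t).const_sub 1).log h2t)
    have d0 : HasDerivAt (fun t : ℝ => 9/4 * t) (9/4) t := by
      simpa using (hasDerivAt_id t).const_mul (9/4 : ℝ)
    exact d0.sub (d1.sub d2)
  have hmono : MonotoneOn f (Set.Icc (0:ℝ) (1/3)) := by
    apply monotoneOn_of_deriv_nonneg (convex_Icc _ _)
    · exact fun t ht => (hder t ht).continuousAt.continuousWithinAt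
    · intro t ht
      rw [interior_Icc] at ht
      exact ((hder t (Set.mem_Icc_of_Ioo ht)).differentiableAt).differentiableWithinAt
    · intro t ht
      rw [interior_Icc] at ht
      rw [(hder t (Set.mem_Icc_of_Ioo ht)).deriv]
      obtain ⟨ht0, ht1⟩ := ht
      have h1t : (0:ℝ) < 1 + t := by linarith
      have h2t : (0:ℝ) < 1 - t := by linarith
      have : 1/(1+t) + 1/(1-t) ≤ 9/4 := by
        rw [div_add_div _ _ (ne_of_gt h1t) (ne_of_gt h2t), div_le_iff₀ (by nlinarith)]
        nlinarith
      have hneg : (-1)/(1-t) = -(1/(1-t)) := by ring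
      rw [hneg]
      linarith
  have h00 : f 0 ≤ f x := hmono (by constructor <;> norm_num) (by constructor <;> linarith) h0
  have hf0 : f 0 = 0 := by simp [hf]
  rw [hf0] at h00
  simp only [hf] at h00
  linarith

lemma exists_auerbach (V : Type*) [NormedAddCommGroup V] [NormedSpace ℝ V]
    [FiniteDimensional ℝ V] (k : ℕ) (hk : Module.finrank ℝ V = k) :
    ∃ b : Module.Basis (Fin k) ℝ V, (∀ i, ‖b i‖ ≤ 1) ∧ ∀ (x : V) (i : Fin k), |b.repr x i| ≤ ‖x‖ := by
  classical
  obtain b0 := Module.finBasisOfFinrankEq ℝ V hk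
  have hDcont : Continuous fun v : Fin k → V => b0.det v := by
    have : (fun v : Fin k → V => b0.det v) = fun v => (b0.toMatrix v).det := by
      funext v; exact b0.det_apply v
    rw [this]
    refine Continuous.matrix_det (continuous_matrix fun i j => ?_)
    exact ((b0.coord i).continuous_of_finiteDimensional).comp (continuous_apply j)
  set S : Set (Fin k → V) := Set.pi Set.univ fun _ => Metric.closedBall (0:V) 1 with hS
  have hScomp : IsCompact S := isCompact_univ_pi fun _ => isCompact_closedBall 0 1
  have hSne : S.Nonempty := ⟨fun _ => 0, fun i _ => by simp⟩
  obtain ⟨e, heS, hmax⟩ := hScomp.exists_isMaxOn hSne (hDcont.abs.continuousOn)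
  have heS' : ∀ i, ‖e i‖ ≤ 1 := by
    intro i
    have := heS i (Set.mem_univ i)
    simpa [mem_closedBall_zero_iff] using this
  have hpos : 0 < |b0.det e| := by
    set v0 : Fin k → V := fun i => ‖b0 i‖⁻¹ • b0 i with hv0
    have hb0 : ∀ i, (0:ℝ) < ‖b0 i‖ := fun i => norm_pos_iff.2 (b0.ne_zero i)
    have hv0S : v0 ∈ S := by
      intro i _
      simp only [hv0, mem_closedBall_zero_iff, norm_smul, norm_inv, norm_norm]
      rw [inv_mul_cancel₀ (ne_of_gt (hb0 i))]
    have hdet : b0.det v0 = (∏ i, ‖b0 i‖⁻¹) • b0.det b0 := by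
      exact b0.det.toMultilinearMap.map_smul_univ _ b0
    have : (0:ℝ) < |b0.det v0| := by
      rw [hdet, b0.det_self]
      simp only [smul_eq_mul, mul_one, Finset.abs_prod]
      exact Finset.prod_pos fun i _ => abs_pos.2 (inv_ne_zero (ne_of_gt (hb0 i)))
    exact lt_of_lt_of_le this (hmax hv0S)
  have hdet_ne : b0.det e ≠ 0 := fun h => by simp [h] at hpos
  obtain ⟨hli, hsp⟩ := (Module.Basis.is_basis_iff_det b0).mpr (isUnit_iff_ne_zero.mpr hdet_ne)
  set b : Module.Basis (Fin k) ℝ V := Module.Basis.mk hli hsp.ge with hb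
  have hbe : ∀ i, b i = e i := fun i => Module.Basis.mk_apply hli hsp.ge i
  refine ⟨b, fun i => by rw [hbe]; exact heS' i, ?_⟩
  have hcramer : ∀ (x : V) (i : Fin k),
      b0.det (Function.update e i x) = b.repr x i * b0.det e := by
    intro x i
    have hx : x = ∑ j, b.repr x j • e j := by
      conv_lhs => rw [← b.sum_repr x]
      exact Finset.sum_congr rfl fun j _ => by rw [hbe]
    conv_lhs => rw [hx]
    rw [b0.det.map_update_sum Finset.univ i (fun j => b.repr x j • e j) e]
    rw [Finset.sum_eq_single i]
    · rw [AlternatingMap.map_update_smul, Function.update_eq_self]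
      simp
    · intro j _ hj
      rw [AlternatingMap.map_update_smul]
      have : b0.det (Function.update e i (e j)) = 0 := by
        apply b0.det.map_eq_zero_of_eq (Function.update e i (e j)) (i := i) (j := j)
        · rw [Function.update_self, Function.update_of_ne hj]
        · exact (Ne.symm hj)
      simp [this]
    · simp
  have hcoord1 : ∀ x : V, ‖x‖ ≤ 1 → ∀ i, |b.repr x i| ≤ 1 := by
    intro x hx i
    have hmem : Function.update e i x ∈ S := by
      intro j _
      simp only [mem_closedBall_zero_iff]
      rcases eq_or_ne j i with rfl | hj
      · rwa [Function.update_self]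
      · rw [Function.update_of_ne hj]; exact heS' j
    have h2 : |b0.det (Function.update e i x)| ≤ |b0.det e| := hmax hmem
    rw [hcramer x i, abs_mul] at h2
    exact (mul_le_iff_le_one_left hpos).mp h2
  intro x i
  rcases eq_or_ne x 0 with rfl | hx
  · simp
  · have hxn : (0:ℝ) < ‖x‖ := norm_pos_iff.2 hx
    have := hcoord1 (‖x‖⁻¹ • x) (by
      rw [norm_smul, norm_inv, norm_norm, inv_mul_cancel₀ (ne_of_gt hxn)]) i
    rw [map_smul] at this
    simp only [Finsupp.coe_smul, Pi.smul_apply, smul_eq_mul, abs_mul, abs_inv, abs_norm] at this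
    rw [inv_mul_le_iff₀ hxn] at this
    simpa [mul_comm] using this

end Aux

/-- The gap (opening) distance between two subspaces of a normed space: the Hausdorff
distance between their unit balls. -/
noncomputable def gapDist (E : Type) [NormedAddCommGroup E] [NormedSpace ℝ E]
    (V W : Submodule ℝ E) : ℝ :=
  Metric.hausdorffDist ((V : Set E) ∩ Metric.closedBall 0 1)
    ((W : Set E) ∩ Metric.closedBall 0 1)

/-- The (logarithmic) Banach–Mazur distance between two finite-dimensional normed spaces. -/
noncomputable def BMdist (X Y : Type)
    [NormedAddCommGroup X] [NormedSpace ℝ X] [FiniteDimensional ℝ X]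
    [NormedAddCommGroup Y] [NormedSpace ℝ Y] [FiniteDimensional ℝ Y] : ℝ :=
  sInf {c : ℝ | ∃ T : X ≃ₗ[ℝ] Y,
    c = Real.log (‖LinearMap.toContinuousLinearMap T.toLinearMap‖ *
      ‖LinearMap.toContinuousLinearMap T.symm.toLinearMap‖)}

set_option maxHeartbeats 1000000 in
set_option synthInstance.maxHeartbeats 400000 in
/-- If `V, W` are `k`-dimensional subspaces of a Banach space `E` with
`Λ_E(V,W) < 1/(3k)`, then (via an Auerbach basis) there is a linear isomorphism
`T : V → W` with `‖T‖ ≤ 1 + k·Λ_E(V,W)` and `‖T⁻¹‖ ≤ (1 − k·Λ_E(V,W))⁻¹`; consequently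
the Banach–Mazur distance between `(V, ‖·‖_E)` and `(W, ‖·‖_E)` is at most
`(9/4)·k·Λ_E(V,W)`. -/
theorem bmDist_le_of_gapDist_small
    (E : Type) [NormedAddCommGroup E] [NormedSpace ℝ E] [CompleteSpace E]
    (k : ℕ) (V W : Submodule ℝ E)
    [FiniteDimensional ℝ V] [FiniteDimensional ℝ W]
    (hV : Module.finrank ℝ V = k) (hW : Module.finrank ℝ W = k)
    (hgap : gapDist E V W < 1 / (3 * k)) :
    (∃ T : V ≃ₗ[ℝ] W,
      (∀ x : V, ‖(T x : E)‖ ≤ (1 + k * gapDist E V W) * ‖x‖) ∧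
      (∀ y : W, ‖(T.symm y : E)‖ ≤ (1 - k * gapDist E V W)⁻¹ * ‖y‖)) ∧
    BMdist V W ≤ (9 / 4) * k * gapDist E V W := by
  classical
  have hg0 : 0 ≤ gapDist E V W := Metric.hausdorffDist_nonneg
  set g := gapDist E V W with hgdef
  rcases Nat.eq_zero_or_pos k with rfl | hk
  · exfalso
    norm_num at hgap
    linarith
  have hkR : (0:ℝ) < k := by exact_mod_cast hk
  have hkg : (k:ℝ) * g < 1/3 := by
    have h := mul_lt_mul_of_pos_left hgap hkR
    rwa [show (k:ℝ) * (1/(3*k)) = 1/3 by field_simp] at h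
  have hkg0 : (0:ℝ) ≤ (k:ℝ) * g := by positivity
  have h1kg : (0:ℝ) < 1 - (k:ℝ) * g := by linarith
  obtain ⟨b, hb1, hb2⟩ := exists_auerbach V k hV
  -- sets
  have hVball : ∀ i, ((b i : E)) ∈ (V : Set E) ∩ Metric.closedBall 0 1 := fun i =>
    ⟨(b i).2, by rw [mem_closedBall_zero_iff, Submodule.norm_coe]; exact hb1 i⟩
  have hVne : ((V : Set E) ∩ Metric.closedBall 0 1).Nonempty := ⟨0, V.zero_mem, by simp⟩
  have hWne : ((W : Set E) ∩ Metric.closedBall 0 1).Nonempty := ⟨0, W.zero_mem, by simp⟩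
  have hVb : Bornology.IsBounded ((V : Set E) ∩ Metric.closedBall 0 1) :=
    Metric.isBounded_closedBall.subset Set.inter_subset_right
  have hWb : Bornology.IsBounded ((W : Set E) ∩ Metric.closedBall 0 1) :=
    Metric.isBounded_closedBall.subset Set.inter_subset_right
  have hne : EMetric.hausdorffEdist ((V : Set E) ∩ Metric.closedBall 0 1)
      ((W : Set E) ∩ Metric.closedBall 0 1) ≠ ⊤ :=
    Metric.hausdorffEdist_ne_top_of_nonempty_of_bounded hVne hWne hVb hWb
  have himg : (Subtype.val '' (Metric.closedBall (0:W) 1) : Set E)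
      = (W : Set E) ∩ Metric.closedBall 0 1 := by
    ext z
    constructor
    · rintro ⟨w, hw, rfl⟩
      refine ⟨w.2, ?_⟩
      rw [mem_closedBall_zero_iff, Submodule.norm_coe]
      simpa [mem_closedBall_zero_iff] using hw
    · rintro ⟨hzW, hz⟩
      refine ⟨⟨z, hzW⟩, ?_, rfl⟩
      rw [mem_closedBall_zero_iff] at hz ⊢
      rwa [Submodule.coe_norm]
  have hWcomp : IsCompact ((W : Set E) ∩ Metric.closedBall 0 1) := by
    rw [← himg]
    exact (isCompact_closedBall (0:W) 1).image continuous_subtype_val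
  -- choose nearby points in W
  have hyex : ∀ i, ∃ y : W, ‖(b i : E) - (y : E)‖ ≤ g := by
    intro i
    have h1 : Metric.infDist (b i : E) ((W : Set E) ∩ Metric.closedBall 0 1) ≤ g :=
      Metric.infDist_le_hausdorffDist_of_mem (hVball i) hne
    obtain ⟨z, hz, hzd⟩ := hWcomp.exists_infDist_eq_dist
      ⟨0, W.zero_mem, by simp⟩ (b i : E)
    refine ⟨⟨z, hz.1⟩, ?_⟩
    calc ‖(b i : E) - z‖ = dist (b i : E) z := (dist_eq_norm _ _).symm
      _ = Metric.infDist (b i : E) ((W : Set E) ∩ Metric.closedBall 0 1) := hzd.symm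
      _ ≤ g := h1
  choose y hy using hyex
  -- the linear map
  set L : V →ₗ[ℝ] W := ∑ i, (b.coord i).smulRight (y i) with hLdef
  have hLapp : ∀ x : V, L x = ∑ i, b.repr x i • y i := by
    intro x
    simp [hLdef, LinearMap.sum_apply, LinearMap.smulRight_apply, Module.Basis.coord_apply]
  have hxsum : ∀ x : V, (x : E) = ∑ i, b.repr x i • (b i : E) := by
    intro x
    conv_lhs => rw [← b.sum_repr x]
    push_cast
    rfl
  have hkey : ∀ x : V, ‖(L x : E) - (x : E)‖ ≤ (k * g) * ‖x‖ := by
    intro x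
    have e1 : (L x : E) - (x : E) = ∑ i, b.repr x i • ((y i : E) - (b i : E)) := by
      rw [hLapp, hxsum]
      push_cast
      rw [← Finset.sum_sub_distrib]
      exact Finset.sum_congr rfl fun i _ => (smul_sub _ _ _).symm
    rw [e1]
    calc ‖∑ i, b.repr x i • ((y i : E) - (b i : E))‖
        ≤ ∑ i, ‖b.repr x i • ((y i : E) - (b i : E))‖ := norm_sum_le _ _
      _ ≤ ∑ _i : Fin k, ‖x‖ * g := by
          apply Finset.sum_le_sum
          intro i _
          rw [norm_smul, Real.norm_eq_abs]
          have h2 : ‖(y i : E) - (b i : E)‖ ≤ g := by rw [norm_sub_rev]; exact hy i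
          exact mul_le_mul (hb2 x i) h2 (norm_nonneg _) (norm_nonneg _)
      _ = (k * g) * ‖x‖ := by
          rw [Finset.sum_const, Finset.card_univ, Fintype.card_fin, nsmul_eq_mul]
          ring
  have hup : ∀ x : V, ‖(L x : E)‖ ≤ (1 + (k:ℝ) * g) * ‖x‖ := by
    intro x
    have h1 : ‖(L x : E)‖ ≤ ‖(L x : E) - (x : E)‖ + ‖(x : E)‖ := by
      calc ‖(L x : E)‖ = ‖((L x : E) - (x : E)) + (x : E)‖ := by rw [sub_add_cancel]
        _ ≤ _ := norm_add_le _ _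
    have h2 := hkey x
    have h3 : ‖(x : E)‖ = ‖x‖ := rfl
    nlinarith [norm_nonneg x]
  have hlow : ∀ x : V, (1 - (k:ℝ) * g) * ‖x‖ ≤ ‖(L x : E)‖ := by
    intro x
    have h1 : ‖(x : E)‖ ≤ ‖(L x : E)‖ + ‖(L x : E) - (x : E)‖ := by
      calc ‖(x : E)‖ = ‖(L x : E) - ((L x : E) - (x : E))‖ := by rw [sub_sub_cancel]
        _ ≤ _ := norm_sub_le _ _
    have h2 := hkey x
    have h3 : ‖(x : E)‖ = ‖x‖ := rfl
    nlinarith [norm_nonneg x]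
  have hinj0 : ∀ x : V, L x = 0 → x = 0 := by
    intro x hx0
    have h := hlow x
    rw [hx0] at h
    simp only [Submodule.coe_zero, norm_zero] at h
    have hx : ‖x‖ ≤ 0 := by nlinarith [norm_nonneg x]
    exact norm_le_zero_iff.mp hx
  have hinj : Function.Injective L := by
    intro a c hac
    have : L (a - c) = 0 := by rw [map_sub, hac, sub_self]
    have := hinj0 _ this
    exact sub_eq_zero.mp this
  obtain ⟨T, hT⟩ : ∃ T : V ≃ₗ[ℝ] W, ∀ x : V, T x = L x := by
    refine ⟨LinearEquiv.ofBijective L ⟨hinj, ?_⟩, fun x => rfl⟩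
    exact (LinearMap.injective_iff_surjective_of_finrank_eq_finrank (by rw [hV, hW])).mp hinj
  have bound1 : ∀ x : V, ‖(T x : E)‖ ≤ (1 + (k:ℝ) * g) * ‖x‖ := by
    intro x; rw [hT]; exact hup x
  have bound2 : ∀ w : W, ‖(T.symm w : E)‖ ≤ (1 - (k:ℝ) * g)⁻¹ * ‖w‖ := by
    intro w
    have h := hlow (T.symm w)
    have heq : T (T.symm w) = w := T.apply_symm_apply w
    rw [hT] at heq
    rw [heq] at h
    have h2 := mul_le_mul_of_nonneg_left h (inv_nonneg.mpr h1kg.le)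
    rw [← mul_assoc, inv_mul_cancel₀ h1kg.ne', one_mul] at h2
    exact h2
  constructor
  · exact ⟨T, bound1, bound2⟩
  -- Banach–Mazur part
  have hprod1 : ∀ S : V ≃ₗ[ℝ] W,
      1 ≤ ‖LinearMap.toContinuousLinearMap S.toLinearMap‖ *
        ‖LinearMap.toContinuousLinearMap S.symm.toLinearMap‖ := by
    intro S
    have hWnt : Nontrivial W := by
      apply Module.nontrivial_of_finrank_pos (R := ℝ)
      rw [hW]; exact hk
    obtain ⟨w, hw⟩ := exists_ne (0 : W)
    set A' := LinearMap.toContinuousLinearMap S.toLinearMap with hA'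
    set B' := LinearMap.toContinuousLinearMap S.symm.toLinearMap with hB'
    have h1 : A' (B' w) = w := by
      simp [hA', hB', LinearMap.coe_toContinuousLinearMap']
    have h2 : ‖w‖ ≤ ‖A'‖ * (‖B'‖ * ‖w‖) := by
      calc ‖w‖ = ‖A' (B' w)‖ := by rw [h1]
        _ ≤ ‖A'‖ * ‖B' w‖ := A'.le_opNorm _
        _ ≤ ‖A'‖ * (‖B'‖ * ‖w‖) :=
            mul_le_mul_of_nonneg_left (B'.le_opNorm w) (ContinuousLinearMap.opNorm_nonneg A')
    have hwpos : (0:ℝ) < ‖w‖ := norm_pos_iff.mpr hw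
    nlinarith [ContinuousLinearMap.opNorm_nonneg A', ContinuousLinearMap.opNorm_nonneg B']
  have hbdd : BddBelow {c : ℝ | ∃ S : V ≃ₗ[ℝ] W,
      c = Real.log (‖LinearMap.toContinuousLinearMap S.toLinearMap‖ *
        ‖LinearMap.toContinuousLinearMap S.symm.toLinearMap‖)} := by
    refine ⟨0, ?_⟩
    rintro c ⟨S, rfl⟩
    exact Real.log_nonneg (hprod1 S)
  have hA : ‖LinearMap.toContinuousLinearMap T.toLinearMap‖ ≤ 1 + (k:ℝ) * g := by
    apply ContinuousLinearMap.opNorm_le_bound _ (by positivity)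
    intro x
    have : LinearMap.toContinuousLinearMap T.toLinearMap x = T x := by
      simp [LinearMap.coe_toContinuousLinearMap']
    rw [this, Submodule.coe_norm]
    exact bound1 x
  have hB : ‖LinearMap.toContinuousLinearMap T.symm.toLinearMap‖ ≤ (1 - (k:ℝ) * g)⁻¹ := by
    apply ContinuousLinearMap.opNorm_le_bound _ (inv_nonneg.mpr h1kg.le)
    intro w
    have : LinearMap.toContinuousLinearMap T.symm.toLinearMap w = T.symm w := by
      simp [LinearMap.coe_toContinuousLinearMap']
    rw [this, Submodule.coe_norm]
    exact bound2 w
  have step1 : BMdist V W ≤ Real.log (‖LinearMap.toContinuousLinearMap T.toLinearMap‖ *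
      ‖LinearMap.toContinuousLinearMap T.symm.toLinearMap‖) := by
    unfold BMdist
    exact csInf_le hbdd ⟨T, rfl⟩
  have step2 : Real.log (‖LinearMap.toContinuousLinearMap T.toLinearMap‖ *
      ‖LinearMap.toContinuousLinearMap T.symm.toLinearMap‖)
      ≤ Real.log ((1 + (k:ℝ) * g) * (1 - (k:ℝ) * g)⁻¹) := by
    apply Real.log_le_log (lt_of_lt_of_le zero_lt_one (hprod1 T))
    exact mul_le_mul hA hB (ContinuousLinearMap.opNorm_nonneg _) (by positivity)
  have step3 : Real.log ((1 + (k:ℝ) * g) * (1 - (k:ℝ) * g)⁻¹) ≤ 9/4 * ((k:ℝ) * g) := by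
    rw [Real.log_mul (by positivity) (by positivity), Real.log_inv]
    have := log_ratio_le hkg0 hkg.le
    linarith
  have : BMdist V W ≤ 9/4 * ((k:ℝ) * g) := le_trans step1 (le_trans step2 step3)
  linarith [this, show (9:ℝ)/4 * ((k:ℝ) * g) = 9/4 * (k:ℝ) * g from by ring]
end

section
/- Let V be a finite-dimensional vector space and let N, P be two norms on V satisfying λ⁻¹·N₀(x) ≤ N(x), P(x) ≤ λ·N₀(x) for all x (for some fixed norm N₀ and λ ≥ 1). Then λ⁻¹·ω(N,P) ≤ d_H^{N₀}(Ball(N), Ball(P)) ≤ λ·ω(N,P), where ω(N,P) = log max{‖Id‖_{N,P}, ‖Id‖_{P,N}} and d_H^{N₀} denotes the Hausdorff distance with respect to N₀ between the unit balls of N and P. -/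
/-- `N` is a norm on the real vector space `V`. -/
def IsNormOn {V : Type} [AddCommGroup V] [Module ℝ V] (N : V → ℝ) : Prop :=
  (∀ x, 0 ≤ N x) ∧ (∀ x, N x = 0 → x = 0) ∧
    (∀ (a : ℝ) (x : V), N (a • x) = |a| * N x) ∧
    ∀ x y, N (x + y) ≤ N x + N y

/-- The operator norm `‖Id‖_{N,P}` of the identity map from `(V, N)` to `(V, P)`. -/
noncomputable def idOpNorm {V : Type} [AddCommGroup V] [Module ℝ V]
    (N P : V → ℝ) : ℝ :=
  sInf {c : ℝ | 0 ≤ c ∧ ∀ x, P x ≤ c * N x}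

/-- The intrinsic metric on the space of norms:
`ω(N,P) = log max {‖Id‖_{N,P}, ‖Id‖_{P,N}}`. -/
noncomputable def omegaDist {V : Type} [AddCommGroup V] [Module ℝ V]
    (N P : V → ℝ) : ℝ :=
  Real.log (max (idOpNorm N P) (idOpNorm P N))

/-- Hausdorff distance between subsets of `V` with respect to the norm `N₀`. -/
noncomputable def hausdorffWrt {V : Type} [AddCommGroup V]
    (N₀ : V → ℝ) (A B : Set V) : ℝ :=
  sInf {δ : ℝ | 0 ≤ δ ∧ (∀ a ∈ A, ∃ b ∈ B, N₀ (a - b) ≤ δ) ∧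
    ∀ b ∈ B, ∃ a ∈ A, N₀ (a - b) ≤ δ}

private lemma isnorm_zero {V : Type} [AddCommGroup V] [Module ℝ V] {N : V → ℝ}
    (h : IsNormOn N) : N 0 = 0 := by
  have h0 := h.2.2.1 0 0
  simpa using h0

private lemma isnorm_sub_comm {V : Type} [AddCommGroup V] [Module ℝ V] {N : V → ℝ}
    (h : IsNormOn N) (a b : V) : N (a - b) = N (b - a) := by
  have h0 := h.2.2.1 (-1) (b - a)
  simpa [neg_sub] using h0

private lemma idOpNorm_nonneg' {V : Type} [AddCommGroup V] [Module ℝ V] {N P : V → ℝ}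
    (hne : {c : ℝ | 0 ≤ c ∧ ∀ x, P x ≤ c * N x}.Nonempty) : 0 ≤ idOpNorm N P :=
  le_csInf hne fun _ hc => hc.1

private lemma idOpNorm_le' {V : Type} [AddCommGroup V] [Module ℝ V] {N P : V → ℝ}
    {c : ℝ} (hc : c ∈ {c : ℝ | 0 ≤ c ∧ ∀ x, P x ≤ c * N x}) : idOpNorm N P ≤ c :=
  csInf_le ⟨0, fun _ h => h.1⟩ hc

private lemma idOpNorm_spec {V : Type} [AddCommGroup V] [Module ℝ V] {N P : V → ℝ}
    (hN : IsNormOn N) (hP : IsNormOn P)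
    (hne : {c : ℝ | 0 ≤ c ∧ ∀ x, P x ≤ c * N x}.Nonempty) :
    ∀ x, P x ≤ idOpNorm N P * N x := by
  intro x
  by_cases hx : N x = 0
  · have hx0 : x = 0 := hN.2.1 x hx
    subst hx0
    simp [isnorm_zero hP, isnorm_zero hN]
  · have hxpos : 0 < N x := lt_of_le_of_ne (hN.1 x) (Ne.symm hx)
    have hdiv : P x / N x ≤ idOpNorm N P :=
      le_csInf hne fun c hc => (div_le_iff₀ hxpos).mpr (hc.2 x)
    exact (div_le_iff₀ hxpos).mp hdiv

/-- Membership witness: `lam * lam` dominates. -/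
private lemma opA_mem {V : Type} [AddCommGroup V] [Module ℝ V] {N P N₀ : V → ℝ}
    {lam : ℝ} (hlam0 : 0 < lam)
    (hPb2 : ∀ x, P x ≤ lam * N₀ x) (hNb' : ∀ x, N₀ x ≤ lam * N x) :
    lam * lam ∈ {c : ℝ | 0 ≤ c ∧ ∀ x, P x ≤ c * N x} := by
  refine ⟨by positivity, fun x => ?_⟩
  have h1 := hPb2 x
  have h2 := hNb' x
  nlinarith [hlam0.le]

/-- If every point of the `N`-ball is `δ`-close to the `P`-ball,
then `P ≤ (1 + lam δ) N`. -/
private lemma key_le {V : Type} [AddCommGroup V] [Module ℝ V]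
    {N P N₀ : V → ℝ} (hN : IsNormOn N) (hP : IsNormOn P)
    {lam : ℝ} (hlam : 1 ≤ lam)
    (hPb2 : ∀ x, P x ≤ lam * N₀ x)
    {δ : ℝ} (hδ0 : 0 ≤ δ)
    (hfor : ∀ a, N a ≤ 1 → ∃ b, P b ≤ 1 ∧ N₀ (a - b) ≤ δ) :
    ∀ x, P x ≤ (1 + lam * δ) * N x := by
  intro x
  by_cases hx : N x = 0
  · have hx0 : x = 0 := hN.2.1 x hx
    subst hx0
    simp [isnorm_zero hP, isnorm_zero hN]
  · have hxpos : 0 < N x := lt_of_le_of_ne (hN.1 x) (Ne.symm hx)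
    set a := (N x)⁻¹ • x with ha
    have hNa : N a = 1 := by
      rw [ha, hN.2.2.1, abs_of_pos (inv_pos.mpr hxpos), inv_mul_cancel₀ (ne_of_gt hxpos)]
    obtain ⟨b, hb1, hb2⟩ := hfor a (le_of_eq hNa)
    have hPab : P (a - b) ≤ lam * δ := by
      calc P (a - b) ≤ lam * N₀ (a - b) := hPb2 _
        _ ≤ lam * δ := by nlinarith
    have hPa : P a ≤ 1 + lam * δ := by
      calc P a = P (a - b + b) := by rw [sub_add_cancel]
        _ ≤ P (a - b) + P b := hP.2.2.2 _ _
        _ ≤ lam * δ + 1 := add_le_add hPab hb1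
        _ = 1 + lam * δ := by ring
    have hxa : x = N x • a := by
      rw [ha, smul_smul, mul_inv_cancel₀ (ne_of_gt hxpos), one_smul]
    calc P x = P (N x • a) := by rw [← hxa]
      _ = N x * P a := by rw [hP.2.2.1, abs_of_pos hxpos]
      _ ≤ N x * (1 + lam * δ) := by nlinarith
      _ = (1 + lam * δ) * N x := by ring

/-- Every point of the `N`-ball is `lam·log M`-close to the `P`-ball. -/
private lemma near_key {V : Type} [AddCommGroup V] [Module ℝ V]
    {N P N₀ : V → ℝ} (hN : IsNormOn N) (hP : IsNormOn P) (hN₀ : IsNormOn N₀)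
    {lam : ℝ} (hlam : 1 ≤ lam)
    (hNb' : ∀ x, N₀ x ≤ lam * N x)
    {M : ℝ} (hM1 : 1 ≤ M) (hMle : ∀ x, P x ≤ M * N x) :
    ∀ a, N a ≤ 1 → ∃ b, P b ≤ 1 ∧ N₀ (a - b) ≤ lam * Real.log M := by
  intro a haN
  have hMpos : 0 < M := lt_of_lt_of_le one_pos hM1
  refine ⟨M⁻¹ • a, ?_, ?_⟩
  · rw [hP.2.2.1, abs_of_pos (inv_pos.mpr hMpos)]
    have hPa : P a ≤ M := by
      have := hMle a
      nlinarith
    calc M⁻¹ * P a ≤ M⁻¹ * M := by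
          exact mul_le_mul_of_nonneg_left hPa (inv_pos.mpr hMpos).le
      _ = 1 := inv_mul_cancel₀ (ne_of_gt hMpos)
  · have heq : a - M⁻¹ • a = (1 - M⁻¹) • a := by
      rw [sub_smul, one_smul]
    rw [heq, hN₀.2.2.1]
    have hinv1 : M⁻¹ ≤ 1 := by
      rw [inv_le_one_iff₀]; right; exact hM1
    rw [abs_of_nonneg (by linarith)]
    have hlog : 1 - M⁻¹ ≤ Real.log M := by
      have h := Real.add_one_le_exp (-Real.log M)
      rw [Real.exp_neg, Real.exp_log hMpos] at h
      linarith
    have hN₀a : N₀ a ≤ lam := by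
      have := hNb' a
      nlinarith
    have hlogpos : 0 ≤ Real.log M := Real.log_nonneg hM1
    calc (1 - M⁻¹) * N₀ a ≤ Real.log M * lam :=
        mul_le_mul hlog hN₀a (hN₀.1 a) hlogpos
      _ = lam * Real.log M := mul_comm _ _

/-- If `N, P` are norms on a finite-dimensional vector space `V` with
`λ⁻¹·N₀ ≤ N, P ≤ λ·N₀` for a fixed norm `N₀` and `λ ≥ 1`, then
`λ⁻¹·ω(N,P) ≤ d_H^{N₀}(Ball(N), Ball(P)) ≤ λ·ω(N,P)`. -/
theorem omegaDist_equiv_hausdorff_balls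
    (V : Type) [AddCommGroup V] [Module ℝ V] [FiniteDimensional ℝ V]
    (N P N₀ : V → ℝ) (hN : IsNormOn N) (hP : IsNormOn P) (hN₀ : IsNormOn N₀)
    (lam : ℝ) (hlam : 1 ≤ lam)
    (hNbound : ∀ x, lam⁻¹ * N₀ x ≤ N x ∧ N x ≤ lam * N₀ x)
    (hPbound : ∀ x, lam⁻¹ * N₀ x ≤ P x ∧ P x ≤ lam * N₀ x) :
    lam⁻¹ * omegaDist N P ≤
        hausdorffWrt N₀ {x | N x ≤ 1} {x | P x ≤ 1} ∧
      hausdorffWrt N₀ {x | N x ≤ 1} {x | P x ≤ 1} ≤ lam * omegaDist N P := by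
  have hlam0 : (0:ℝ) < lam := lt_of_lt_of_le one_pos hlam
  have hNb' : ∀ x, N₀ x ≤ lam * N x := by
    intro x
    have h := (hNbound x).1
    have h2 : lam * (lam⁻¹ * N₀ x) ≤ lam * N x := mul_le_mul_of_nonneg_left h hlam0.le
    rwa [← mul_assoc, mul_inv_cancel₀ hlam0.ne', one_mul] at h2
  have hPb' : ∀ x, N₀ x ≤ lam * P x := by
    intro x
    have h := (hPbound x).1
    have h2 : lam * (lam⁻¹ * N₀ x) ≤ lam * P x := mul_le_mul_of_nonneg_left h hlam0.le
    rwa [← mul_assoc, mul_inv_cancel₀ hlam0.ne', one_mul] at h2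
  have hNb2 : ∀ x, N x ≤ lam * N₀ x := fun x => (hNbound x).2
  have hPb2 : ∀ x, P x ≤ lam * N₀ x := fun x => (hPbound x).2
  have hAmem := opA_mem (N := N) (P := P) (N₀ := N₀) hlam0 hPb2 hNb'
  have hBmem := opA_mem (N := P) (P := N) (N₀ := N₀) hlam0 hNb2 hPb'
  have hAne : {c : ℝ | 0 ≤ c ∧ ∀ x, P x ≤ c * N x}.Nonempty := ⟨_, hAmem⟩
  have hBne : {c : ℝ | 0 ≤ c ∧ ∀ x, N x ≤ c * P x}.Nonempty := ⟨_, hBmem⟩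
  have hA0 : 0 ≤ idOpNorm N P := idOpNorm_nonneg' hAne
  have hB0 : 0 ≤ idOpNorm P N := idOpNorm_nonneg' hBne
  have hAspec := idOpNorm_spec hN hP hAne
  have hBspec := idOpNorm_spec hP hN hBne
  set M := max (idOpNorm N P) (idOpNorm P N) with hM
  have hω : omegaDist N P = Real.log M := rfl
  by_cases hV : ∀ z : V, z = 0
  · -- trivial space
    have hA : idOpNorm N P = 0 := le_antisymm
      (idOpNorm_le' ⟨le_refl 0, fun x => by
        rw [hV x]; simp [isnorm_zero hN, isnorm_zero hP]⟩) hA0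
    have hB : idOpNorm P N = 0 := le_antisymm
      (idOpNorm_le' ⟨le_refl 0, fun x => by
        rw [hV x]; simp [isnorm_zero hN, isnorm_zero hP]⟩) hB0
    have hω0 : omegaDist N P = 0 := by
      rw [hω, hM, hA, hB]; simp
    have hD0mem : (0:ℝ) ∈ {δ : ℝ | 0 ≤ δ ∧
        (∀ a ∈ {x | N x ≤ 1}, ∃ b ∈ {x | P x ≤ 1}, N₀ (a - b) ≤ δ) ∧
        ∀ b ∈ {x | P x ≤ 1}, ∃ a ∈ {x | N x ≤ 1}, N₀ (a - b) ≤ δ} := by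
      refine ⟨le_refl 0, fun a _ => ⟨0, ?_, ?_⟩, fun b _ => ⟨0, ?_, ?_⟩⟩
      · simp [Set.mem_setOf_eq, isnorm_zero hP]
      · rw [hV a]; simp [isnorm_zero hN₀]
      · simp [Set.mem_setOf_eq, isnorm_zero hN]
      · rw [hV b]; simp [isnorm_zero hN₀]
    have hH0 : hausdorffWrt N₀ {x | N x ≤ 1} {x | P x ≤ 1} = 0 := by
      unfold hausdorffWrt
      exact le_antisymm (csInf_le ⟨0, fun δ h => h.1⟩ hD0mem)
        (le_csInf ⟨0, hD0mem⟩ fun δ h => h.1)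
    rw [hω0, hH0]
    simp
  · -- nontrivial space
    push_neg at hV
    obtain ⟨x₀, hx₀⟩ := hV
    have hNx₀ : 0 < N x₀ := by
      rcases lt_or_eq_of_le (hN.1 x₀) with h | h
      · exact h
      · exact absurd (hN.2.1 x₀ h.symm) hx₀
    have hPx₀ : 0 < P x₀ := by
      rcases lt_or_eq_of_le (hP.1 x₀) with h | h
      · exact h
      · exact absurd (hP.2.1 x₀ h.symm) hx₀
    have hAlb : P x₀ / N x₀ ≤ idOpNorm N P :=
      le_csInf hAne fun c hc => (div_le_iff₀ hNx₀).mpr (hc.2 x₀)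
    have hBlb : N x₀ / P x₀ ≤ idOpNorm P N :=
      le_csInf hBne fun c hc => (div_le_iff₀ hPx₀).mpr (hc.2 x₀)
    have hM1 : 1 ≤ M := by
      have h1 : P x₀ / N x₀ ≤ M := le_trans hAlb (le_max_left _ _)
      have h2 : N x₀ / P x₀ ≤ M := le_trans hBlb (le_max_right _ _)
      have hd1 : 0 < P x₀ / N x₀ := div_pos hPx₀ hNx₀
      have hd2 : 0 < N x₀ / P x₀ := div_pos hNx₀ hPx₀
      have hprod : (P x₀ / N x₀) * (N x₀ / P x₀) = 1 := by
        field_simp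
      nlinarith
    have hMpos : 0 < M := lt_of_lt_of_le one_pos hM1
    have hlogM : 0 ≤ Real.log M := Real.log_nonneg hM1
    have hMleA : ∀ x, P x ≤ M * N x := fun x => by
      have := hAspec x
      have hNx := hN.1 x
      nlinarith [le_max_left (idOpNorm N P) (idOpNorm P N)]
    have hMleB : ∀ x, N x ≤ M * P x := fun x => by
      have := hBspec x
      have hPx := hP.1 x
      nlinarith [le_max_right (idOpNorm N P) (idOpNorm P N)]
    have hnear1 := near_key hN hP hN₀ hlam hNb' hM1 hMleA
    have hnear2 := near_key hP hN hN₀ hlam hPb' hM1 hMleB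
    have hDmem : lam * Real.log M ∈ {δ : ℝ | 0 ≤ δ ∧
        (∀ a ∈ {x | N x ≤ 1}, ∃ b ∈ {x | P x ≤ 1}, N₀ (a - b) ≤ δ) ∧
        ∀ b ∈ {x | P x ≤ 1}, ∃ a ∈ {x | N x ≤ 1}, N₀ (a - b) ≤ δ} := by
      refine ⟨mul_nonneg hlam0.le hlogM, fun a haa => ?_, fun b hbb => ?_⟩
      · obtain ⟨b, hb1, hb2⟩ := hnear1 a haa
        exact ⟨b, hb1, hb2⟩
      · obtain ⟨a, ha1, ha2⟩ := hnear2 b hbb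
        refine ⟨a, ha1, ?_⟩
        rw [isnorm_sub_comm hN₀]
        exact ha2
    constructor
    · -- lower bound
      rw [hω]
      unfold hausdorffWrt
      refine le_csInf ⟨_, hDmem⟩ fun δ hδ => ?_
      obtain ⟨hδ0, hfor, hback⟩ := hδ
      have hkey1 : ∀ x, P x ≤ (1 + lam * δ) * N x :=
        key_le hN hP hlam hPb2 hδ0 fun a ha => by
          obtain ⟨b, hb1, hb2⟩ := hfor a ha
          exact ⟨b, hb1, hb2⟩
      have hkey2 : ∀ x, N x ≤ (1 + lam * δ) * P x :=
        key_le hP hN hlam hNb2 hδ0 fun b hb => by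
          obtain ⟨a, ha1, ha2⟩ := hback b hb
          refine ⟨a, ha1, ?_⟩
          rw [isnorm_sub_comm hN₀]
          exact ha2
      have hpos : (0:ℝ) ≤ 1 + lam * δ := by nlinarith
      have hA1 : idOpNorm N P ≤ 1 + lam * δ := idOpNorm_le' ⟨hpos, hkey1⟩
      have hB1 : idOpNorm P N ≤ 1 + lam * δ := idOpNorm_le' ⟨hpos, hkey2⟩
      have hMle : M ≤ 1 + lam * δ := max_le hA1 hB1
      have hexp : M ≤ Real.exp (lam * δ) := by
        have := Real.add_one_le_exp (lam * δ)
        linarith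
      have hlogle : Real.log M ≤ lam * δ :=
        (Real.log_le_iff_le_exp hMpos).mpr hexp
      calc lam⁻¹ * Real.log M ≤ lam⁻¹ * (lam * δ) :=
          mul_le_mul_of_nonneg_left hlogle (inv_pos.mpr hlam0).le
        _ = δ := by field_simp
    · -- upper bound
      rw [hω]
      unfold hausdorffWrt
      exact csInf_le ⟨0, fun δ h => h.1⟩ hDmem
end

section
/- Let (M, p) be a finite pointed metric space. Then the Lipschitz free space F(M, p), i.e., the linear span of the evaluation molecules {δ_x − δ_p : x ∈ M} in the dual of Lip₀(M,p), is a finite-dimensional polyhedral Banach space: its closed unit ball equals the convex hull of the finitely many molecules μ_{x,y} = (δ_x − δ_y)/d(x,y) for x ≠ y in M. -/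
/-!
Both sets are convex and every molecule lies in the ball, which gives `⊇`. For `⊆`, the convex
hull of the finitely many molecules is closed, so a point `a` of the ball outside it is strictly
separated by a linear functional `b ↦ ∑ x, b x * g x` and a level `u`. The bound on the molecules
says exactly that `g / u` is `1`-Lipschitz, so after normalising `g / u` to vanish at `p` (which
does not change its pairing with `a`, as `∑ a = 0`), the ball condition yields `∑ a g ≤ u`, a
contradiction.
-/

open Finset

theorem sum_mul_sub_const {ι : Type*} [Fintype ι] {a : ι → ℝ} (ha : ∑ i, a i = 0) (g : ι → ℝ)
    (c : ℝ) : ∑ i, a i * (g i - c) = ∑ i, a i * g i := by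
  simp only [mul_sub, sum_sub_distrib, ← sum_mul, ha, zero_mul, sub_zero]

namespace LipschitzFree

variable {M : Type*} [MetricSpace M]

theorem abs_sub_le_mul_dist_of_div_dist_le {g : M → ℝ} {L : ℝ}
    (h : ∀ x y, x ≠ y → (g x - g y) / dist x y ≤ L) (x y : M) :
    |g x - g y| ≤ L * dist x y := by
  rcases eq_or_ne x y with rfl | hxy
  · simp
  have hd : 0 < dist x y := dist_pos.2 hxy
  rw [abs_sub_le_iff, ← div_le_iff₀ hd, ← div_le_iff₀ hd]
  exact ⟨h x y hxy, dist_comm x y ▸ h y x hxy.symm⟩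

theorem pos_of_div_dist_lt [Nontrivial M] {g : M → ℝ} {u : ℝ}
    (h : ∀ x y, x ≠ y → (g x - g y) / dist x y < u) : 0 < u := by
  obtain ⟨x, y, hxy⟩ := exists_pair_ne M
  have hxy' := h x y hxy
  have hyx := h y x hxy.symm
  rw [dist_comm, ← neg_sub, neg_div] at hyx
  linarith

/-- The closed unit ball of `F(M,p)`, with `a : M → ℝ` acting on `f ∈ Lip₀(M,p)` by `∑ a f`. -/
def unitBall [Fintype M] (p : M) : Set (M → ℝ) :=
  {a | ∑ x, a x = 0 ∧
    ∀ f : M → ℝ, f p = 0 → (∀ x y, |f x - f y| ≤ dist x y) → |∑ x, a x * f x| ≤ 1}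

noncomputable def molecule [DecidableEq M] (x y : M) : M → ℝ :=
  fun z => ((if z = x then (1 : ℝ) else 0) - (if z = y then 1 else 0)) / dist x y

variable (M) in
def molecules [DecidableEq M] : Set (M → ℝ) := {a | ∃ x y : M, x ≠ y ∧ a = molecule x y}

theorem sum_molecule_mul [Fintype M] [DecidableEq M] (x y : M) (f : M → ℝ) :
    ∑ z, molecule x y z * f z = (f x - f y) / dist x y := by
  simp only [molecule, div_mul_eq_mul_div, ← sum_div, sub_mul, ite_mul, one_mul, zero_mul,
    sum_sub_distrib, sum_ite_eq', mem_univ, if_true]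

theorem sum_molecule [Fintype M] [DecidableEq M] (x y : M) : ∑ z, molecule x y z = 0 := by
  simpa using sum_molecule_mul x y (fun _ => 1)

theorem finite_molecules [Finite M] [DecidableEq M] : (molecules M).Finite :=
  (Set.finite_range fun q : M × M => molecule q.1 q.2).subset <| by
    rintro a ⟨x, y, -, rfl⟩
    exact ⟨(x, y), rfl⟩

theorem convex_unitBall [Fintype M] (p : M) : Convex ℝ (unitBall p) := by
  intro a ha b hb s t hs ht hst
  have hlin : ∀ f : M → ℝ,
      ∑ x, (s • a + t • b) x * f x = s * ∑ x, a x * f x + t * ∑ x, b x * f x := by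
    intro f
    simp only [Pi.add_apply, Pi.smul_apply, smul_eq_mul, add_mul, mul_assoc, sum_add_distrib,
      ← mul_sum]
  refine ⟨?_, fun f hfp hf => ?_⟩
  · simpa only [mul_one, ha.1, hb.1, mul_zero, add_zero] using hlin fun _ => 1
  calc |∑ x, (s • a + t • b) x * f x|
      ≤ s * |∑ x, a x * f x| + t * |∑ x, b x * f x| := by
        rw [hlin]
        refine (abs_add_le _ _).trans_eq ?_
        rw [abs_mul, abs_mul, abs_of_nonneg hs, abs_of_nonneg ht]
    _ ≤ s * 1 + t * 1 := by gcongr <;> [exact ha.2 f hfp hf; exact hb.2 f hfp hf]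
    _ = 1 := by rw [mul_one, mul_one, hst]

theorem molecules_subset_unitBall [Fintype M] [DecidableEq M] (p : M) :
    molecules M ⊆ unitBall p := by
  rintro a ⟨x, y, hxy, rfl⟩
  have hd : 0 < dist x y := dist_pos.2 hxy
  refine ⟨sum_molecule x y, fun f _ hf => ?_⟩
  rw [sum_molecule_mul, abs_div, abs_of_pos hd, div_le_one hd]
  exact hf x y

theorem sum_mul_le_of_lipschitz [Fintype M] {p : M} {a : M → ℝ} (ha : a ∈ unitBall p)
    {g : M → ℝ} {L : ℝ} (hL : 0 < L) (hg : ∀ x y, |g x - g y| ≤ L * dist x y) :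
    ∑ x, a x * g x ≤ L := by
  set f : M → ℝ := fun z => (g z - g p) / L
  have hf : ∀ x y, |f x - f y| ≤ dist x y := fun x y => by
    rw [← sub_div, sub_sub_sub_cancel_right, abs_div, abs_of_pos hL, div_le_iff₀' hL]
    exact hg x y
  have hpair : ∑ x, a x * f x = (∑ x, a x * g x) / L := by
    simp only [f, mul_div_assoc', ← sum_div, sum_mul_sub_const ha.1]
  have := (le_abs_self _).trans (ha.2 f (by simp [f]) hf)
  rwa [hpair, div_le_one hL] at this

theorem unitBall_subset_convexHull_molecules [Fintype M] [DecidableEq M] [Nontrivial M]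
    (p : M) : unitBall p ⊆ convexHull ℝ (molecules M) := by
  intro a ha
  by_contra hna
  obtain ⟨φ, u, hφ, hφa⟩ := geometric_hahn_banach_closed_point (convex_convexHull ℝ _)
    (finite_molecules.isClosed_convexHull ℝ) hna
  set g : M → ℝ := fun x => φ fun y => if x = y then 1 else 0
  have hφ_eq (b : M → ℝ) : φ b = ∑ x, b x * g x := by
    simpa only [smul_eq_mul, ContinuousLinearMap.coe_coe] using φ.toLinearMap.pi_apply_eq_sum_univ b
  have hg (x y : M) (hxy : x ≠ y) : (g x - g y) / dist x y < u := by
    rw [← sum_molecule_mul, ← hφ_eq]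
    exact hφ _ (subset_convexHull ℝ _ ⟨x, y, hxy, rfl⟩)
  have hu : 0 < u := pos_of_div_dist_lt hg
  have hgu := abs_sub_le_mul_dist_of_div_dist_le fun x y hxy => (hg x y hxy).le
  linarith [sum_mul_le_of_lipschitz ha hu hgu, hφ_eq a]

end LipschitzFree

open LipschitzFree in
/-- The Lipschitz free space of a finite pointed metric space is polyhedral: identifying
`F(M,p)` (the span of the molecules `δ_x − δ_p` in `Lip₀(M,p)*`) with the functions
`a : M → ℝ` with `∑ a = 0` acting on `f ∈ Lip₀(M,p)` by `∑ x, a x * f x`, its closed unit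
ball — the set of such `a` with `|∑ x, a x * f x| ≤ 1` for every `1`-Lipschitz `f` with
`f p = 0` — equals the convex hull of the finitely many molecules
`μ_{x,y} = (δ_x − δ_y)/d(x,y)`, `x ≠ y`. -/
theorem lipschitzFree_ball_eq_convexHull_molecules
    (M : Type) [MetricSpace M] [Fintype M] [DecidableEq M] [Nontrivial M] (p : M) :
    {a : M → ℝ | (∑ x, a x) = 0 ∧
        ∀ f : M → ℝ, f p = 0 → (∀ x y : M, |f x - f y| ≤ dist x y) →
          |∑ x, a x * f x| ≤ 1} =
      convexHull ℝ {a : M → ℝ | ∃ x y : M, x ≠ y ∧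
        a = fun z => ((if z = x then (1 : ℝ) else 0) - (if z = y then 1 else 0)) /
          dist x y} :=
  (unitBall_subset_convexHull_molecules p).antisymm <|
    convexHull_min (molecules_subset_unitBall p) (convex_unitBall p)
end
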